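/- arXiv:1907.04413 — 8 statements merged into one kernel-verified Lean document; each statement's English description precedes it below -/
import Mathlib

section
/- Let (U, S_1, ..., S_m) be a finite set system with set weights w_i ≥ 0, let k be an integer, and let β ≥ 1. Suppose the integrality-gap hypothesis holds: for every subset U' of U and every vector x ∈ [0,1]^m satisfying Σ_{i : e ∈ S_i} x_i ≥ 1 for all e ∈ U', there exists T ⊆ {1,...,m} with U' ⊆ ∪_{i∈T} S_i and Σ_{i∈T} w_i ≤ β·Σ_i w_i x_i. Let (x, z) be any feasible solution of PSC-LP (i.e., x_i ≥ 0, z_j ∈ [0,1], Σ_{i : e_j ∈ S_i} x_i ≥ z_j for every e_j ∈ U, and Σ_{e_j ∈ U} z_j ≥ k), and let W = max_i w_i. Then there exists T ⊆ {1,...,m} with |∪_{i∈T} S_i| ≥ k and Σ_{i∈T} w_i ≤ (e/(e-1))·(β+1)·Σ_i w_i x_i + W. -/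
/-!
Put `c = e/(e-1)`. The elements whose fractional coverage is at least `1/c` are covered by the
integrality-gap hypothesis applied to `min(1, c·x)`, at cost at most `c·β·LP`. Every other element
has `z_e ≤ 1/c`, and the `d` elements still missing are covered greedily. If `C` is `c` times the
`z`-mass of the uncovered elements, averaging against the LP gives a set covering `g > 0` new
elements at cost at most `c·LP·g/C ≤ c·LP·log(C/(C-g))`, and taking it lowers `d` by `g` and `C`
by at most `g`. So the greedy phase costs at most `c·LP·log(C/(C-d))` plus the last set,
which may overshoot and is paid for by `W`; starting from `C = c·d` this is
`c·LP·log(c/(c-1)) = c·LP`.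
-/

open Finset Real

section

variable {ι α : Type*}

section SetSystem

variable [Fintype ι] [DecidableEq α]

def fracCover (S : ι → Finset α) (x : ι → ℝ) (e : α) : ℝ :=
  ∑ i ∈ univ.filter (fun i => e ∈ S i), x i

def IntegralityGap (S : ι → Finset α) (w : ι → ℝ) (β : ℝ) : Prop :=
  ∀ (U' : Finset α) (x : ι → ℝ), (∀ i, x i ∈ Set.Icc (0 : ℝ) 1) →
    (∀ e ∈ U', 1 ≤ fracCover S x e) →
    ∃ T : Finset ι, U' ⊆ T.biUnion S ∧ ∑ i ∈ T, w i ≤ β * ∑ i, w i * x i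

lemma sum_fracCover (S : ι → Finset α) (x : ι → ℝ) (R : Finset α) :
    ∑ e ∈ R, fracCover S x e = ∑ i, #(R ∩ S i) * x i := by
  simp only [fracCover, sum_filter]
  rw [sum_comm]
  refine sum_congr rfl fun i _ => ?_
  rw [← sum_filter, filter_mem_eq_inter, sum_const, nsmul_eq_mul]

end SetSystem

lemma min_sum_le_sum_min {M : Type*} [AddCommMonoid M] [LinearOrder M] [IsOrderedAddMonoid M]
    (s : Finset ι) {f : ι → M} {a : M} (ha : 0 ≤ a) (hf : ∀ i ∈ s, 0 ≤ f i) :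
    min a (∑ i ∈ s, f i) ≤ ∑ i ∈ s, min a (f i) := by
  by_cases h : ∃ i ∈ s, a ≤ f i
  · obtain ⟨i, hi, hai⟩ := h
    calc min a (∑ i ∈ s, f i) ≤ min a (f i) := (min_le_left _ _).trans (le_min le_rfl hai)
      _ ≤ ∑ j ∈ s, min a (f j) := single_le_sum (fun j hj => le_min ha (hf j hj)) hi
  · push Not at h
    rw [sum_congr rfl fun i hi => min_eq_right (h i hi).le]
    exact min_le_right _ _

lemma sum_union_le_add {M : Type*} [AddCommMonoid M] [PartialOrder M] [IsOrderedAddMonoid M]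
    [DecidableEq ι] {s t : Finset ι} {f : ι → M} (hf : ∀ i ∈ s ∩ t, 0 ≤ f i) :
    ∑ i ∈ s ∪ t, f i ≤ ∑ i ∈ s, f i + ∑ i ∈ t, f i := by
  rw [← sum_union_inter]
  exact le_add_of_nonneg_right (sum_nonneg hf)

lemma card_inter_union [DecidableEq α] (R A B : Finset α) :
    #(R ∩ (A ∪ B)) = #(R ∩ A) + #((R \ A) ∩ B) := by
  rw [← card_union_of_disjoint (disjoint_left.2 fun e he he' => (mem_sdiff.1 (mem_inter.1 he').1).2
    (mem_inter.1 he).2)]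
  congr 1
  ext e
  simp only [mem_inter, mem_union, mem_sdiff]
  tauto

lemma div_div_sub_one_div_sub_one_sub_one {K : Type*} [Field K] {a : K} (ha : a ≠ 1) :
    a / (a - 1) / (a / (a - 1) - 1) = a := by
  have ha' : a - 1 ≠ 0 := sub_ne_zero.2 ha
  rw [div_sub_one ha', sub_sub_cancel, div_div_div_cancel_right₀ ha', div_one]

lemma div_le_log_div_sub {g C : ℝ} (hg : 0 ≤ g) (hgC : g < C) : g / C ≤ log (C / (C - g)) := by
  have hC : 0 < C := hg.trans_lt hgC
  have := one_sub_inv_le_log_of_pos (div_pos hC (sub_pos.2 hgC))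
  rwa [inv_div, one_sub_div hC.ne', sub_sub_cancel] at this

lemma exists_pos_mul_le_of_le_sum [Fintype ι] {a w x : ι → ℝ} {Z : ℝ} (hw : ∀ i, 0 ≤ w i)
    (hx : ∀ i, 0 ≤ x i) (ha : ∀ i, 0 ≤ a i) (hZ : 0 < Z) (hZa : Z ≤ ∑ i, a i * x i) :
    ∃ i, 0 < a i ∧ w i * Z ≤ (∑ i, w i * x i) * a i := by
  by_contra! h
  set B := ∑ i, w i * x i
  obtain ⟨j, -, hj⟩ := exists_lt_of_sum_lt (f := fun _ => (0 : ℝ)) (by simpa using hZ.trans_le hZa)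
  have hterm : ∀ i, B * (a i * x i) ≤ w i * x i * Z := by
    intro i
    rcases (ha i).eq_or_lt with hai | hai
    · rw [← hai]; simpa using mul_nonneg (mul_nonneg (hw i) (hx i)) hZ.le
    · nlinarith [h i hai, hx i]
  have hlt : ∑ i, B * (a i * x i) < ∑ i, w i * x i * Z := by
    refine sum_lt_sum (fun i _ => hterm i) ⟨j, mem_univ j, ?_⟩
    have hxj : 0 < x j := pos_of_mul_pos_right hj (ha j)
    have haj : 0 < a j := pos_of_mul_pos_left hj (hx j)
    nlinarith [h j haj]
  rw [← mul_sum, ← sum_mul] at hlt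
  have hB : 0 ≤ B := sum_nonneg fun i _ => mul_nonneg (hw i) (hx i)
  nlinarith

section Greedy

variable [Fintype ι] [DecidableEq α] {S : ι → Finset α} {w x : ι → ℝ} {z : α → ℝ} {c : ℝ}

lemma exists_mul_le_mul_card_inter (hw : ∀ i, 0 ≤ w i) (hx : ∀ i, 0 ≤ x i) (hc : 0 < c)
    {R : Finset α} {C : ℝ} (hzx : ∀ e ∈ R, z e ≤ fracCover S x e) (hC : 0 < C)
    (hCR : C ≤ c * ∑ e ∈ R, z e) :
    ∃ i, 0 < #(R ∩ S i) ∧ w i * C ≤ c * (∑ i, w i * x i) * #(R ∩ S i) := by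
  obtain ⟨i, hg, hwi⟩ := exists_pos_mul_le_of_le_sum (a := fun i => (#(R ∩ S i) : ℝ)) hw hx
    (fun i => Nat.cast_nonneg _) (div_pos hC hc)
    (by rw [← sum_fracCover, div_le_iff₀' hc]; exact hCR.trans (by gcongr; exact hzx _ ‹_›))
  refine ⟨i, by exact_mod_cast hg, ?_⟩
  calc w i * C = c * (w i * (C / c)) := by field_simp
    _ ≤ _ := by rw [mul_assoc]; gcongr

lemma sub_card_inter_le_mul_sum_sdiff {R : Finset α} {C : ℝ} (hzc : ∀ e ∈ R, c * z e ≤ 1)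
    (hCR : C ≤ c * ∑ e ∈ R, z e) (A : Finset α) : C - #(R ∩ A) ≤ c * ∑ e ∈ R \ A, z e := by
  have hA : c * ∑ e ∈ R ∩ A, z e ≤ #(R ∩ A) := by
    rw [mul_sum]
    simpa using sum_le_card_nsmul _ _ 1 fun e he => hzc e (mem_inter.1 he).1
  rw [← sum_inter_add_sum_sdiff R A, mul_add] at hCR
  linarith

theorem exists_partial_cover_cost_le [DecidableEq ι] {W : ℝ} (hw : ∀ i, 0 ≤ w i)
    (hx : ∀ i, 0 ≤ x i) (hc : 0 < c) (hwW : ∀ i, w i ≤ W) (hW : 0 ≤ W) {d : ℕ} {R : Finset α}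
    {C : ℝ} (hzc : ∀ e ∈ R, c * z e ≤ 1) (hzx : ∀ e ∈ R, z e ≤ fracCover S x e)
    (hCR : C ≤ c * ∑ e ∈ R, z e) (hdC : (d : ℝ) < C) :
    ∃ T : Finset ι, d ≤ #(R ∩ T.biUnion S) ∧
      ∑ i ∈ T, w i ≤ c * (∑ i, w i * x i) * log (C / (C - d)) + W := by
  induction d using Nat.strong_induction_on generalizing R C with
  | _ d ih =>
  set B := ∑ i, w i * x i
  have hB : 0 ≤ B := sum_nonneg fun i _ => mul_nonneg (hw i) (hx i)
  have hC : 0 < C := d.cast_nonneg.trans_lt hdC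
  rcases d.eq_zero_or_pos with rfl | hd
  · exact ⟨∅, by simp, by simpa using hW⟩
  obtain ⟨i, hg, hwi⟩ := exists_mul_le_mul_card_inter hw hx hc hzx hC hCR
  set g := #(R ∩ S i)
  by_cases hdg : d ≤ g
  · refine ⟨{i}, by simpa using hdg, ?_⟩
    have hlog : 0 ≤ log (C / (C - d)) :=
      (div_nonneg d.cast_nonneg hC.le).trans (div_le_log_div_sub d.cast_nonneg hdC)
    rw [sum_singleton]
    linarith [hwW i, mul_nonneg (mul_nonneg hc.le hB) hlog]
  push Not at hdg
  have hgC : (g : ℝ) < C := (Nat.cast_lt.2 hdg).trans hdC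
  have hwi_le : w i ≤ c * B * log (C / (C - g)) :=
    calc w i ≤ c * B * (g / C) := by
          rw [← mul_div_assoc, le_div_iff₀ hC]; exact hwi
      _ ≤ c * B * log (C / (C - g)) := by gcongr; exact div_le_log_div_sub g.cast_nonneg hgC
  have hdg_cast : ((d - g : ℕ) : ℝ) = d - g := Nat.cast_sub hdg.le
  obtain ⟨T, hT, hTw⟩ := ih (d - g) (Nat.sub_lt hd hg) (R := R \ S i) (C := C - g)
    (fun e he => hzc e (sdiff_subset he)) (fun e he => hzx e (sdiff_subset he))
    (sub_card_inter_le_mul_sum_sdiff hzc hCR (S i)) (by rw [hdg_cast]; linarith)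
  refine ⟨insert i T, ?_, ?_⟩
  · rw [biUnion_insert, card_inter_union]
    exact Nat.sub_le_iff_le_add'.1 hT
  · rw [hdg_cast, sub_sub_sub_cancel_right] at hTw
    have hlog : log (C / (C - g)) + log ((C - g) / (C - d)) = log (C / (C - d)) := by
      rw [← log_mul (div_pos hC (by linarith)).ne' (div_pos (by linarith) (by linarith)).ne',
        div_mul_div_cancel₀ (by linarith)]
    calc ∑ j ∈ insert i T, w j ≤ w i + ∑ j ∈ T, w j := by
          rw [insert_eq, ← sum_singleton w i]
          exact sum_union_le_add fun j _ => hw j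
      _ ≤ c * B * log (C / (C - g)) + (c * B * log ((C - g) / (C - d)) + W) :=
          add_le_add hwi_le hTw
      _ = c * B * log (C / (C - d)) + W := by rw [← hlog]; ring

theorem exists_partial_cover_of_le_sum [DecidableEq ι] {W : ℝ} (hw : ∀ i, 0 ≤ w i)
    (hx : ∀ i, 0 ≤ x i) (hc : 1 < c) (hwW : ∀ i, w i ≤ W) (hW : 0 ≤ W) {d : ℕ} {R : Finset α}
    (hzc : ∀ e ∈ R, c * z e ≤ 1) (hzx : ∀ e ∈ R, z e ≤ fracCover S x e) (hd : 0 < d)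
    (hdR : (d : ℝ) ≤ ∑ e ∈ R, z e) :
    ∃ T : Finset ι, d ≤ #(R ∩ T.biUnion S) ∧
      ∑ i ∈ T, w i ≤ c * (∑ i, w i * x i) * log (c / (c - 1)) + W := by
  have hd' : (0 : ℝ) < d := Nat.cast_pos.2 hd
  have hc0 : 0 < c := zero_lt_one.trans hc
  have hlog : c * d / (c * d - d) = c / (c - 1) := by
    rw [← sub_one_mul, mul_div_mul_right _ _ hd'.ne']
  simpa only [hlog] using exists_partial_cover_cost_le hw hx hc0 hwW hW hzc hzx
    (mul_le_mul_of_nonneg_left hdR hc0.le) (lt_mul_left hd' hc)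

end Greedy

lemma exists_cover_of_one_le_mul_fracCover [Fintype ι] [Fintype α] [DecidableEq α]
    {S : ι → Finset α} {w x : ι → ℝ} {β c : ℝ} (hgap : IntegralityGap S w β) (hβ : 0 ≤ β)
    (hw : ∀ i, 0 ≤ w i) (hx : ∀ i, 0 ≤ x i) (hc : 0 ≤ c) :
    ∃ T : Finset ι, (∀ e, 1 ≤ c * fracCover S x e → e ∈ T.biUnion S) ∧
      ∑ i ∈ T, w i ≤ c * β * ∑ i, w i * x i := by
  obtain ⟨T, hT, hTw⟩ := hgap (univ.filter fun e => 1 ≤ c * fracCover S x e)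
    (fun i => min 1 (c * x i))
    (fun i => ⟨le_min zero_le_one (mul_nonneg hc (hx i)), min_le_left _ _⟩) fun e he =>
      calc 1 = min 1 (c * fracCover S x e) := (min_eq_left (mem_filter.1 he).2).symm
        _ ≤ fracCover S (fun i => min 1 (c * x i)) e := by
          rw [fracCover, mul_sum]
          exact min_sum_le_sum_min _ zero_le_one fun i _ => mul_nonneg hc (hx i)
  refine ⟨T, fun e he => hT (mem_filter.2 ⟨mem_univ e, he⟩), hTw.trans ?_⟩
  calc β * ∑ i, w i * min 1 (c * x i) ≤ β * ∑ i, w i * (c * x i) := by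
        gcongr with i
        exacts [hw i, min_le_right _ _]
    _ = c * β * ∑ i, w i * x i := by simp_rw [mul_left_comm (w _) c, ← mul_sum]; ring

end

/-- Partial set cover rounding guarantee: given a deletion-closed
integrality-gap hypothesis with factor `β` for the set-cover LP, any feasible solution
`(x, z)` of PSC-LP with requirement `k` can be rounded to an integral collection `T`
covering at least `k` elements of cost at most `(e/(e-1))(β+1)·(LP cost) + W`,
where `W = max_i w_i`. -/
theorem partial_set_cover_rounding
    {α : Type*} [Fintype α] [DecidableEq α] {m : ℕ}
    (S : Fin m → Finset α) (w : Fin m → ℝ) (hw : ∀ i, 0 ≤ w i)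
    (k : ℕ) (β : ℝ) (hβ : 1 ≤ β)
    (hgap : ∀ (U' : Finset α) (x : Fin m → ℝ),
      (∀ i, x i ∈ Set.Icc (0:ℝ) 1) →
      (∀ e ∈ U', 1 ≤ ∑ i ∈ Finset.univ.filter (fun i => e ∈ S i), x i) →
      ∃ T : Finset (Fin m), U' ⊆ T.biUnion S ∧
        ∑ i ∈ T, w i ≤ β * ∑ i, w i * x i)
    (x : Fin m → ℝ) (z : α → ℝ)
    (hx : ∀ i, 0 ≤ x i) (hz : ∀ e, z e ∈ Set.Icc (0:ℝ) 1)
    (hcov : ∀ e, z e ≤ ∑ i ∈ Finset.univ.filter (fun i => e ∈ S i), x i)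
    (htot : (k : ℝ) ≤ ∑ e, z e)
    (W : ℝ) (hW : IsGreatest (Set.range w) W) :
    ∃ T : Finset (Fin m), k ≤ (T.biUnion S).card ∧
      ∑ i ∈ T, w i ≤
        (Real.exp 1 / (Real.exp 1 - 1)) * (β + 1) * (∑ i, w i * x i) + W := by
  obtain ⟨i₀, rfl⟩ := hW.1
  set c := exp 1 / (exp 1 - 1)
  have he1 : 1 < exp 1 := one_lt_exp_iff.2 one_pos
  have hc : 1 < c := (one_lt_div (by linarith)).2 (by linarith)
  have hB : 0 ≤ ∑ i, w i * x i := sum_nonneg fun i _ => mul_nonneg (hw i) (hx i)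
  obtain ⟨T₁, hT₁, hT₁w⟩ :=
    exists_cover_of_one_le_mul_fracCover (c := c) hgap (by linarith) hw hx (by linarith)
  set A := T₁.biUnion S
  by_cases hkA : k ≤ #A
  · exact ⟨T₁, hkA, by nlinarith [hw i₀]⟩
  have hrest : ((k - #A : ℕ) : ℝ) ≤ ∑ e ∈ univ \ A, z e := by
    rw [Nat.cast_sub (by omega)]
    simpa using sub_card_inter_le_mul_sum_sdiff (c := 1) (R := univ)
      (by simpa using fun e => (hz e).2) (by simpa using htot) A
  obtain ⟨T₂, hT₂, hT₂w⟩ := exists_partial_cover_of_le_sum hw hx hc (fun i => hW.2 ⟨i, rfl⟩)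
    (hw i₀) (R := univ \ A)
    (fun e he => (mul_le_mul_of_nonneg_left (hcov e) (by linarith)).trans
      (not_le.1 fun h => (mem_sdiff.1 he).2 (hT₁ e h)).le)
    (fun e _ => hcov e) (by omega) hrest
  rw [div_div_sub_one_div_sub_one_sub_one he1.ne', log_exp, mul_one] at hT₂w
  refine ⟨T₁ ∪ T₂, ?_, ?_⟩
  · rw [union_biUnion, ← univ_inter (A ∪ _), card_inter_union, univ_inter]
    omega
  · calc ∑ i ∈ T₁ ∪ T₂, w i ≤ ∑ i ∈ T₁, w i + ∑ i ∈ T₂, w i := sum_union_le_add fun i _ => hw i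
      _ ≤ c * β * ∑ i, w i * x i + (c * ∑ i, w i * x i + w i₀) := add_le_add hT₁w hT₂w
      _ = c * (β + 1) * ∑ i, w i * x i + w i₀ := by ring
end

section
/- Let (U, S_1, ..., S_m) be a finite set system with set weights w_i ≥ 0, let k be an integer, and let 0 < τ ≤ 1 - 1/e. Let (x, z) satisfy x_i ≥ 0, z_j ∈ [0,1], Σ_{i : e_j ∈ S_i} x_i ≥ z_j for every e_j ∈ U, and Σ_{e_j ∈ U} z_j ≥ k. Let U_ℓ = { e_j ∈ U : z_j < τ } and k' = k - |U \ U_ℓ|. Then there exists T ⊆ {1,...,m} such that |(∪_{i∈T} S_i) ∩ U_ℓ| ≥ k' and Σ_{i∈T} w_i ≤ max_i w_i + (1/τ)·Σ_i w_i x_i. -/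
/-!
Run the greedy algorithm on the shallow elements. While fewer than `K = k - |U \ U_ℓ|` of them
are covered, say `c`, the uncovered ones carry `z`-mass at least `β = K - τ c` (a covered shallow
element carries less than `τ`), and `x` covers this mass fractionally, so by averaging some set
costs at most `A / β` per newly covered element, where `A = Σ w_i x_i`. Since `β` drops by `τ` per
newly covered element, the total cost is at most `(A / τ) Σ Δβ / β ≤ (A / τ) log (β₀ / β_end)`.
All but the last step keep `β ≥ K (1 - τ)`, so this is at most `(A / τ) (-log (1 - τ)) ≤ A / τ`;
the last set is charged to `max_i w_i`.
-/

open Finset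

theorem le_mul_log_sub_log_of_mul_le {w c a b : ℝ} (hc : 0 ≤ c) (ha : 0 < a) (hab : a ≤ b)
    (h : w * b ≤ c * (b - a)) : w ≤ c * (Real.log b - Real.log a) := by
  have hb : 0 < b := ha.trans_le hab
  have hlog : (b - a) / b ≤ Real.log b - Real.log a := by
    have := Real.one_sub_inv_le_log_of_pos (div_pos hb ha)
    rwa [inv_div, Real.log_div hb.ne' ha.ne', ← div_self hb.ne', ← sub_div] at this
  calc w ≤ c * ((b - a) / b) := by rw [← mul_div_assoc]; exact (le_div_iff₀ hb).2 h
    _ ≤ c * (Real.log b - Real.log a) := mul_le_mul_of_nonneg_left hlog hc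

theorem exists_pos_and_mul_sum_le {ι : Type*} [Fintype ι] {w x c : ι → ℝ}
    (hw : ∀ i, 0 ≤ w i) (hx : ∀ i, 0 ≤ x i) (hpos : 0 < ∑ i, x i * c i) :
    ∃ i, 0 < c i ∧ w i * ∑ j, x j * c j ≤ (∑ j, w j * x j) * c i := by
  set P := ∑ j, x j * c j
  set A := ∑ j, w j * x j
  by_contra! h
  have hA : 0 ≤ A := sum_nonneg fun j _ => mul_nonneg (hw j) (hx j)
  have hle : ∀ i ∈ univ, x i * (A * c i) ≤ x i * (w i * P) := fun i _ => by
    rcases le_or_gt (c i) 0 with hc | hc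
    · exact (mul_nonpos_of_nonneg_of_nonpos (hx i) (mul_nonpos_of_nonneg_of_nonpos hA hc)).trans
        (mul_nonneg (hx i) (mul_nonneg (hw i) hpos.le))
    · exact mul_le_mul_of_nonneg_left (h i hc).le (hx i)
  obtain ⟨i₀, -, hi₀⟩ := exists_lt_of_sum_lt (f := fun _ => (0 : ℝ)) (by simpa using hpos)
  have hc₀ : 0 < c i₀ := pos_of_mul_pos_right hi₀ (hx i₀)
  have hlt : ∑ i, x i * (A * c i) < ∑ i, x i * (w i * P) :=
    sum_lt_sum hle ⟨i₀, mem_univ _,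
      mul_lt_mul_of_pos_left (h i₀ hc₀) (pos_of_mul_pos_left hi₀ hc₀.le)⟩
  have hl : ∑ i, x i * (A * c i) = A * P := by
    rw [mul_sum]; exact sum_congr rfl fun i _ => by ring
  have hr : ∑ i, x i * (w i * P) = A * P := by
    rw [sum_mul]; exact sum_congr rfl fun i _ => by ring
  linarith

section Greedy

variable {ι : Type*} [DecidableEq ι] (f : Finset ι → ℕ) (w : ι → ℝ) {W A τ K : ℝ}

def AdmitsGreedyStep (A τ K : ℝ) : Prop :=
  ∀ T, (f T : ℝ) < K →
    ∃ i, f T < f (insert i T) ∧ w i * (K - τ * f T) ≤ A * (f (insert i T) - f T)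

theorem AdmitsGreedyStep.exists_sum_le_log (hstep : AdmitsGreedyStep f w A τ K) (hwW : ∀ i, w i ≤ W)
    (hA : 0 ≤ A) (hτ0 : 0 < τ) (hτ1 : τ < 1) (n : ℕ) (T : Finset ι) (hn : K ≤ f T + n)
    (hT : (f T : ℝ) < K) :
    ∃ T', K ≤ f T' ∧ ∑ i ∈ T', w i ≤ ∑ i ∈ T, w i + W +
      A / τ * (Real.log (K - τ * f T) - Real.log (K * (1 - τ))) := by
  induction n generalizing T with
  | zero => push_cast at hn; linarith
  | succ n ih =>
    obtain ⟨i, hgrow, hwi⟩ := hstep T hT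
    have hiT : i ∉ T := fun hi => by rw [insert_eq_of_mem hi] at hgrow; exact hgrow.false
    have hK : 0 < K := (Nat.cast_nonneg _).trans_lt hT
    have hβ : K * (1 - τ) ≤ K - τ * f T := by nlinarith
    have hβpos : 0 < K * (1 - τ) := mul_pos hK (by linarith)
    have hAτ : 0 ≤ A / τ := div_nonneg hA hτ0.le
    rcases le_or_gt K (f (insert i T)) with hdone | hdone
    · refine ⟨insert i T, hdone, ?_⟩
      rw [sum_insert hiT]
      have := mul_nonneg hAτ (sub_nonneg.2 (Real.log_le_log hβpos hβ))
      linarith [hwW i]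
    · have hgrow' : (f T : ℝ) + 1 ≤ f (insert i T) := by exact_mod_cast hgrow
      obtain ⟨T', hKT', hsum⟩ := ih (insert i T) (by push_cast at hn; linarith) hdone
      refine ⟨T', hKT', ?_⟩
      have hβ' : K * (1 - τ) ≤ K - τ * f (insert i T) := by nlinarith
      have hcharge : w i ≤ A / τ * (Real.log (K - τ * f T) - Real.log (K - τ * f (insert i T))) :=
        le_mul_log_sub_log_of_mul_le hAτ (hβpos.trans_le hβ') (by nlinarith) (by
          calc w i * (K - τ * f T) ≤ A * (f (insert i T) - f T) := hwi
            _ = A / τ * (K - τ * f T - (K - τ * f (insert i T))) := by field_simp; ring)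
      rw [sum_insert hiT] at hsum
      linarith

theorem AdmitsGreedyStep.exists_sum_le (hstep : AdmitsGreedyStep f w A τ K) (hwW : ∀ i, w i ≤ W)
    (hW : 0 ≤ W) (hA : 0 ≤ A) (hτ0 : 0 < τ) (hτ1 : τ < 1) (hf : f ∅ = 0) :
    ∃ T, K ≤ f T ∧ ∑ i ∈ T, w i ≤ W + A / τ * -Real.log (1 - τ) := by
  have hAτ : 0 ≤ A / τ := div_nonneg hA hτ0.le
  rcases le_or_gt K 0 with hK | hK
  · refine ⟨∅, by simpa [hf] using hK, ?_⟩
    have := mul_nonneg hAτ (neg_nonneg.2 (Real.log_nonpos (x := 1 - τ) (by linarith) (by linarith)))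
    simpa using add_nonneg hW this
  · obtain ⟨T, hKT, hsum⟩ := hstep.exists_sum_le_log f w hwW hA hτ0 hτ1 ⌈K⌉₊ ∅
      (by simpa [hf] using Nat.le_ceil K) (by simpa [hf] using hK)
    refine ⟨T, hKT, ?_⟩
    rwa [hf, Nat.cast_zero, mul_zero, sub_zero, Real.log_mul hK.ne' (by linarith), sum_empty,
      zero_add, sub_add_cancel_left] at hsum

end Greedy

section SetSystem

variable {ι α : Type*} [DecidableEq α] (S : ι → Finset α) (x : ι → ℝ) (z : α → ℝ)

theorem card_union_inter_eq_add_card_inter_sdiff (s t u : Finset α) :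
    #((s ∪ t) ∩ u) = #(t ∩ u) + #(s ∩ (u \ t)) := by
  rw [← card_union_of_disjoint]
  · congr 1; ext; simp only [mem_union, mem_inter, mem_sdiff]; tauto
  · exact disjoint_left.2 fun a ha ha' => (mem_sdiff.1 (mem_inter.1 ha').2).2 (mem_inter.1 ha).1

theorem sum_sub_mul_card_inter_le_sum_sdiff {τ : ℝ} (u t : Finset α) (hz : ∀ e ∈ u, z e ≤ τ) :
    ∑ e ∈ u, z e - τ * #(t ∩ u) ≤ ∑ e ∈ u \ t, z e := by
  have := sum_le_card_nsmul (u ∩ t) z τ fun e he => hz e (mem_inter.1 he).1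
  rw [nsmul_eq_mul] at this
  rw [← sum_inter_add_sum_sdiff u t z, inter_comm t u]
  linarith

variable [Fintype ι]

theorem sum_le_sum_mul_card_inter (hcov : ∀ e, z e ≤ ∑ i ∈ univ.filter (fun i => e ∈ S i), x i)
    (r : Finset α) : ∑ e ∈ r, z e ≤ ∑ i, x i * #(S i ∩ r) :=
  calc ∑ e ∈ r, z e ≤ ∑ e ∈ r, ∑ i, if e ∈ S i then x i else 0 :=
        sum_le_sum fun e _ => by simpa only [sum_filter] using hcov e
    _ = ∑ i, x i * #(S i ∩ r) := by
        rw [sum_comm]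
        refine sum_congr rfl fun i _ => ?_
        rw [sum_ite_mem, sum_const, nsmul_eq_mul, inter_comm, mul_comm]

variable [DecidableEq ι] {w : ι → ℝ}

theorem admitsGreedyStep_card_biUnion_inter (hw : ∀ i, 0 ≤ w i) (hx : ∀ i, 0 ≤ x i)
    (hcov : ∀ e, z e ≤ ∑ i ∈ univ.filter (fun i => e ∈ S i), x i) {τ K : ℝ} (u : Finset α)
    (hz : ∀ e ∈ u, z e ≤ τ) (hτ : τ ≤ 1) (hK : K ≤ ∑ e ∈ u, z e) :
    AdmitsGreedyStep (fun T => #(T.biUnion S ∩ u)) w (∑ i, w i * x i) τ K := by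
  intro T hT
  set r := u \ T.biUnion S
  have hgain : ∀ i, #((insert i T).biUnion S ∩ u) = #(T.biUnion S ∩ u) + #(S i ∩ r) := fun i => by
    rw [biUnion_insert, card_union_inter_eq_add_card_inter_sdiff]
  have hβ : 0 < K - τ * #(T.biUnion S ∩ u) := by
    nlinarith [(Nat.cast_nonneg _ : (0 : ℝ) ≤ #(T.biUnion S ∩ u))]
  have hmass : K - τ * #(T.biUnion S ∩ u) ≤ ∑ i, x i * #(S i ∩ r) := by
    linarith [sum_sub_mul_card_inter_le_sum_sdiff z u (T.biUnion S) hz,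
      sum_le_sum_mul_card_inter S x z hcov r]
  obtain ⟨i, hi, hwi⟩ := exists_pos_and_mul_sum_le hw hx (hβ.trans_le hmass)
  refine ⟨i, ?_, ?_⟩ <;> dsimp only
  · rw [hgain]; exact Nat.lt_add_of_pos_right (by exact_mod_cast hi)
  · rw [hgain, Nat.cast_add, add_sub_cancel_left]
    exact (mul_le_mul_of_nonneg_left hmass (hw i)).trans hwi

end SetSystem

theorem neg_log_one_sub_le_one {τ : ℝ} (hτ : τ ≤ 1 - 1 / Real.exp 1) : -Real.log (1 - τ) ≤ 1 := by
  have h : Real.exp (-1) ≤ 1 - τ := by rw [Real.exp_neg, ← one_div]; linarith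
  linarith [(Real.le_log_iff_exp_le ((Real.exp_pos _).trans_le h)).2 h]

theorem sum_sub_card_filter_not_le_sum_filter {α : Type*} [Fintype α] (p : α → Prop)
    [DecidablePred p] {z : α → ℝ} (hz : ∀ e, z e ≤ 1) :
    ∑ e, z e - #(univ.filter fun e => ¬ p e) ≤ ∑ e ∈ univ.filter p, z e := by
  have := sum_le_card_nsmul (univ.filter fun e => ¬ p e) z 1 fun e _ => hz e
  rw [nsmul_one] at this
  rw [← sum_filter_add_sum_filter_not univ p z]
  linarith

/-- Covering the shallow elements: given a feasible PSC-LP solution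
`(x, z)` and `0 < τ ≤ 1 - 1/e`, with `U_ℓ = {e : z e < τ}` and
`k' = k - |U \ U_ℓ|`, there is a collection `T` covering at least `k'` elements
from `U_ℓ` of weight at most `max_i w_i + (1/τ)·Σ_i w_i x_i`. -/
theorem cover_shallow_elements
    {α : Type*} [Fintype α] [DecidableEq α] {m : ℕ}
    (S : Fin m → Finset α) (w : Fin m → ℝ) (hw : ∀ i, 0 ≤ w i)
    (k : ℕ) (τ : ℝ) (hτ0 : 0 < τ) (hτ1 : τ ≤ 1 - 1 / Real.exp 1)
    (x : Fin m → ℝ) (z : α → ℝ)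
    (hx : ∀ i, 0 ≤ x i) (hz : ∀ e, z e ∈ Set.Icc (0:ℝ) 1)
    (hcov : ∀ e, z e ≤ ∑ i ∈ Finset.univ.filter (fun i => e ∈ S i), x i)
    (htot : (k : ℝ) ≤ ∑ e, z e)
    (W : ℝ) (hW : IsGreatest (Set.range w) W) :
    ∃ T : Finset (Fin m),
      (k : ℝ) - ((Finset.univ.filter (fun e => ¬ z e < τ)).card : ℝ) ≤
        ((T.biUnion S ∩ Finset.univ.filter (fun e => z e < τ)).card : ℝ) ∧
      ∑ i ∈ T, w i ≤ W + (1 / τ) * ∑ i, w i * x i := by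
  have hwW : ∀ i, w i ≤ W := fun i => hW.2 ⟨i, rfl⟩
  have hW0 : 0 ≤ W := hW.1.elim fun i hi => hi ▸ hw i
  have hA : 0 ≤ ∑ i, w i * x i := sum_nonneg fun i _ => mul_nonneg (hw i) (hx i)
  have hτ : τ < 1 := hτ1.trans_lt (by simp [Real.exp_pos])
  have hmass : (k : ℝ) - #(univ.filter fun e => ¬ z e < τ) ≤ ∑ e ∈ univ.filter (z · < τ), z e :=
    (sub_le_sub_right htot _).trans
      (sum_sub_card_filter_not_le_sum_filter (z · < τ) fun e => (hz e).2)
  have hstep := admitsGreedyStep_card_biUnion_inter S x z hw hx hcov _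
    (fun e he => (mem_filter.1 he).2.le) hτ.le hmass
  obtain ⟨T, hT, hsum⟩ := hstep.exists_sum_le _ _ hwW hW0 hA hτ0 hτ (by simp)
  refine ⟨T, hT, hsum.trans ?_⟩
  calc W + (∑ i, w i * x i) / τ * -Real.log (1 - τ) ≤ W + (∑ i, w i * x i) / τ * 1 :=
        add_le_add_right (mul_le_mul_of_nonneg_left (neg_log_one_sub_le_one hτ1)
          (div_nonneg hA hτ0.le)) W
    _ = W + 1 / τ * ∑ i, w i * x i := by ring
end

section
/- Let (U, S_1, ..., S_m) be a finite set system with set weights w_i ≥ 0, and let B > 0. Suppose x_i ≥ 0 and z_j satisfy z_j ≤ min{1, Σ_{i : e_j ∈ S_i} x_i} for all e_j ∈ U and Σ_i w_i x_i ≤ B, and let Z = Σ_{e_j ∈ U} z_j. Then there exists T ⊆ {1,...,m} with |∪_{i∈T} S_i| ≥ (1 - 1/e)·Z and Σ_{i∈T} w_i ≤ B + max_i w_i. -/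
/-!
Run greedy against the LP solution. If the chosen sets cover `c` elements, the LP still covers at
least `Z - c` uncovered elements using weight at most `B`, so by averaging some set `S i` covers at
least `w i (Z - c) / B` new ones. Adding it multiplies the gap `Z - c` by at most
`1 - w i / B ≤ exp (-w i / B)`, so the gap stays below `exp (-w(T) / B) Z`. Stop as soon as the
gap is at most `Z / e`: this happens at the latest when the weight first exceeds `B`, and at that
point the last set added overshoots the budget by at most `max_i w i`.
-/

open Finset

lemma exists_pos_and_mul_le_mul_of_le_sum_mul {ι : Type*} [Fintype ι] {w x g : ι → ℝ}
    {B D : ℝ} (hw : ∀ i, 0 ≤ w i) (hx : ∀ i, 0 ≤ x i) (hbudget : ∑ i, w i * x i ≤ B)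
    (hD : 0 < D) (hDg : D ≤ ∑ i, g i * x i) :
    ∃ i, 0 < g i ∧ w i * D ≤ B * g i := by
  by_contra! h
  have hB : 0 ≤ B := (sum_nonneg fun i _ => mul_nonneg (hw i) (hx i)).trans hbudget
  have hle : ∀ i ∈ univ, B * (g i * x i) ≤ D * (w i * x i) := by
    intro i _
    rcases le_or_gt (g i) 0 with hg | hg
    · nlinarith [mul_nonpos_of_nonpos_of_nonneg hg (hx i), mul_nonneg (hw i) (hx i)]
    · nlinarith [mul_le_mul_of_nonneg_right (h i hg).le (hx i)]
  have hlt : ∃ i ∈ univ, B * (g i * x i) < D * (w i * x i) := by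
    obtain ⟨i, -, hi⟩ :=
      exists_lt_of_sum_lt (f := fun _ => (0 : ℝ)) (by simpa using hD.trans_le hDg)
    have hg : 0 < g i := pos_of_mul_pos_left hi (hx i)
    have hxi : 0 < x i := pos_of_mul_pos_right hi hg.le
    exact ⟨i, mem_univ i, by nlinarith [mul_lt_mul_of_pos_right (h i hg) hxi]⟩
  have := sum_lt_sum hle hlt
  rw [← mul_sum, ← mul_sum] at this
  nlinarith

section Coverage

variable {α ι : Type*} [Fintype α] [DecidableEq α] [Fintype ι] (S : ι → Finset α)

structure IsFractionalSolution (w : ι → ℝ) (B : ℝ) (x : ι → ℝ) (z : α → ℝ) :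
    Prop where
  nonneg : ∀ i, 0 ≤ x i
  le_one : ∀ e, z e ≤ 1
  le_sum : ∀ e, z e ≤ ∑ i ∈ univ.filter (fun i => e ∈ S i), x i
  budget : ∑ i, w i * x i ≤ B

variable {S} {w x : ι → ℝ} {z : α → ℝ} {B : ℝ}

lemma sum_sdiff_sum_filter_mem_eq (S : ι → Finset α) (x : ι → ℝ) (C : Finset α) :
    ∑ e ∈ univ \ C, ∑ i ∈ univ.filter (fun i => e ∈ S i), x i =
      ∑ i, ((S i \ C).card : ℝ) * x i := by
  simp_rw [sum_filter]
  rw [sum_comm]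
  refine sum_congr rfl fun i _ => ?_
  rw [← sum_filter, sum_const, nsmul_eq_mul]
  congr 3
  ext e
  simp [and_comm]

lemma IsFractionalSolution.sum_sub_card_le (h : IsFractionalSolution S w B x z) (C : Finset α) :
    ∑ e, z e - C.card ≤ ∑ i, ((S i \ C).card : ℝ) * x i := by
  rw [← sum_sdiff_sum_filter_mem_eq, ← sum_sdiff (subset_univ C)]
  have hC : ∑ e ∈ C, z e ≤ C.card := by
    simpa using sum_le_sum fun e (_ : e ∈ C) => h.le_one e
  linarith [sum_le_sum fun e (_ : e ∈ univ \ C) => h.le_sum e]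

variable [DecidableEq ι]

lemma IsFractionalSolution.exists_greedy_step (h : IsFractionalSolution S w B x z) (hB : 0 < B)
    (hw : ∀ i, 0 ≤ w i) {T : Finset ι} (hT : ((T.biUnion S).card : ℝ) < ∑ e, z e) :
    ∃ i, (T.biUnion S).card < ((insert i T).biUnion S).card ∧
      ∑ e, z e - ((insert i T).biUnion S).card ≤
        Real.exp (-(w i / B)) * (∑ e, z e - (T.biUnion S).card) := by
  set C := T.biUnion S
  obtain ⟨i, hgain, hratio⟩ := exists_pos_and_mul_le_mul_of_le_sum_mul hw h.nonneg h.budget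
    (sub_pos.2 hT) (h.sum_sub_card_le C)
  have hcard : (((insert i T).biUnion S).card : ℝ) = (S i \ C).card + C.card := by
    rw [biUnion_insert, ← card_sdiff_add_card, Nat.cast_add]
  refine ⟨i, by exact_mod_cast hcard ▸ lt_add_of_pos_left _ hgain, ?_⟩
  calc ∑ e, z e - ((insert i T).biUnion S).card ≤ (1 - w i / B) * (∑ e, z e - C.card) := by
        rw [hcard, sub_mul, one_mul, div_mul_eq_mul_div]
        linarith [(div_le_iff₀' hB).2 hratio]
    _ ≤ Real.exp (-(w i / B)) * (∑ e, z e - C.card) :=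
        mul_le_mul_of_nonneg_right (Real.one_sub_le_exp_neg _) (sub_pos.2 hT).le

theorem IsFractionalSolution.exists_cover_of_sub_card_le_exp (h : IsFractionalSolution S w B x z)
    (hB : 0 < B) (hw : ∀ i, 0 ≤ w i) {W : ℝ} (hW₀ : 0 ≤ W) (hW : ∀ i, w i ≤ W)
    (T : Finset ι) (hT : ∑ i ∈ T, w i ≤ B)
    (hgap : ∑ e, z e - (T.biUnion S).card ≤ Real.exp (-(∑ i ∈ T, w i) / B) * ∑ e, z e) :
    ∃ T' : Finset ι, (1 - 1 / Real.exp 1) * ∑ e, z e ≤ (T'.biUnion S).card ∧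
      ∑ i ∈ T', w i ≤ B + W := by
  by_cases hdone : ∑ e, z e - (T.biUnion S).card ≤ 1 / Real.exp 1 * ∑ e, z e
  · exact ⟨T, by linarith, by linarith⟩
  have he : 1 / Real.exp 1 < 1 := (div_lt_one (Real.exp_pos 1)).2 (Real.one_lt_exp_iff.2 one_pos)
  have hcov : ((T.biUnion S).card : ℝ) < ∑ e, z e := by
    have : (0 : ℝ) < 1 / Real.exp 1 := by positivity
    nlinarith [(Nat.cast_nonneg (T.biUnion S).card : (0 : ℝ) ≤ _)]
  obtain ⟨i, hcard, hstep⟩ := h.exists_greedy_step hB hw hcov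
  have hi : i ∉ T := fun hi => by simp [insert_eq_of_mem hi] at hcard
  have hgap' : ∑ e, z e - ((insert i T).biUnion S).card ≤
      Real.exp (-(∑ j ∈ insert i T, w j) / B) * ∑ e, z e :=
    calc _ ≤ Real.exp (-(w i / B)) * (∑ e, z e - (T.biUnion S).card) := hstep
      _ ≤ Real.exp (-(w i / B)) * (Real.exp (-(∑ j ∈ T, w j) / B) * ∑ e, z e) := by gcongr
      _ = _ := by
        rw [← mul_assoc, ← Real.exp_add, sum_insert hi]
        congr 2
        ring
  by_cases hT' : ∑ j ∈ insert i T, w j ≤ B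
  · exact h.exists_cover_of_sub_card_le_exp hB hw hW₀ hW (insert i T) hT' hgap'
  refine ⟨insert i T, ?_, by linarith [sum_insert (f := w) hi, hW i]⟩
  have hexp : Real.exp (-(∑ j ∈ insert i T, w j) / B) ≤ 1 / Real.exp 1 := by
    rw [one_div, ← Real.exp_neg, Real.exp_le_exp, neg_div, neg_le_neg_iff, le_div_iff₀ hB]
    linarith
  nlinarith
termination_by Fintype.card α - (T.biUnion S).card
decreasing_by
  have := card_le_univ ((insert i T).biUnion S)
  omega

end Coverage

/-- Greedy for budgeted max coverage versus the LP value: for any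
fractional solution of budget `B` and value `Z = Σ_j z_j`, there is a collection `T`
covering at least `(1 - 1/e)·Z` elements with weight at most `B + max_i w_i`. -/
theorem greedy_budgeted_max_coverage
    {α : Type*} [Fintype α] [DecidableEq α] {m : ℕ}
    (S : Fin m → Finset α) (w : Fin m → ℝ) (hw : ∀ i, 0 ≤ w i)
    (B : ℝ) (hB : 0 < B)
    (x : Fin m → ℝ) (z : α → ℝ)
    (hx : ∀ i, 0 ≤ x i)
    (hz : ∀ e, z e ≤ min 1 (∑ i ∈ Finset.univ.filter (fun i => e ∈ S i), x i))
    (hbudget : ∑ i, w i * x i ≤ B)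
    (W : ℝ) (hW : IsGreatest (Set.range w) W) :
    ∃ T : Finset (Fin m),
      (1 - 1 / Real.exp 1) * (∑ e, z e) ≤ ((T.biUnion S).card : ℝ) ∧
      ∑ i ∈ T, w i ≤ B + W := by
  obtain ⟨⟨i₀, rfl⟩, hmax⟩ := hW
  have hsol : IsFractionalSolution S w B x z :=
    ⟨hx, fun e => (hz e).trans (min_le_left _ _), fun e => (hz e).trans (min_le_right _ _),
      hbudget⟩
  exact hsol.exists_cover_of_sub_card_le_exp hB hw (hw i₀) (fun i => hmax ⟨i, rfl⟩) ∅
    (by simpa using hB.le) (by simp)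
end

section
/- Let (U, S_1, ..., S_m) be a finite set system with set weights w_i ≥ 0, and let B > 0. Suppose x_i ≥ 0 and z_j satisfy z_j ≤ min{1, Σ_{i : e_j ∈ S_i} x_i} for all e_j ∈ U and Σ_i w_i x_i ≤ B, and let Z = Σ_{e_j ∈ U} z_j. If there is a constant c > 0 such that |S_i| ≤ c·Z for every i, then there exists T ⊆ {1,...,m} with |∪_{i∈T} S_i| ≥ (1 - 1/e)·Z and Σ_{i∈T} w_i ≤ (1 + e·c)·B. -/
/-!
Write `Z = ∑ z` and let `C` be the set of elements covered so far. The LP solution covers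
at least `Z - #C` of the fractional mass outside `C`, at cost at most `B`, so averaging
over the sets finds one whose new elements cost at most `B / (Z - #C)` each. Pick such sets
while `Z - #C > Z / e`. Since `a / g ≤ log g - log (g - a)`, all but the last picked set
cost at most `B (log Z - log (Z / e)) = B` in total; the last one covers at most `c Z`
elements at unit price below `e B / Z`, so it costs at most `e c B`.
-/

open Finset Real

theorem sub_div_le_log_sub_log {x y : ℝ} (hy : 0 < y) (hyx : y ≤ x) :
    (x - y) / x ≤ log x - log y := by
  have hx : 0 < x := hy.trans_le hyx
  have h := one_sub_inv_le_log_of_pos (div_pos hx hy)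
  rwa [log_div hx.ne' hy.ne', inv_div, one_sub_div hx.ne'] at h

theorem exists_pos_and_mul_le_of_le_sum_mul {ι : Type*} (s : Finset ι)
    {x a w : ι → ℝ} {g B : ℝ} (hx : ∀ i ∈ s, 0 ≤ x i) (ha : ∀ i ∈ s, 0 ≤ a i)
    (hw : ∀ i ∈ s, 0 ≤ w i) (hB : 0 ≤ B) (hg : 0 < g) (hbudget : ∑ i ∈ s, w i * x i ≤ B)
    (hvalue : g ≤ ∑ i ∈ s, x i * a i) :
    ∃ i ∈ s, 0 < a i ∧ g * w i ≤ B * a i := by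
  by_contra! h
  obtain ⟨j, hj, hxa⟩ : ∃ j ∈ s, (0 : ℝ) < x j * a j :=
    exists_lt_of_sum_lt (by simpa using hg.trans_le hvalue)
  have ha_pos : 0 < a j := pos_of_mul_pos_right hxa (hx j hj)
  have hlt : ∑ i ∈ s, x i * (B * a i) < ∑ i ∈ s, x i * (g * w i) := by
    refine sum_lt_sum (fun i hi => ?_) ⟨j, hj, ?_⟩
    · rcases (ha i hi).eq_or_lt with hai | hai
      · rw [← hai, mul_zero, mul_zero]
        exact mul_nonneg (hx i hi) (mul_nonneg hg.le (hw i hi))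
      · exact mul_le_mul_of_nonneg_left (h i hi hai).le (hx i hi)
    · exact mul_lt_mul_of_pos_left (h j hj ha_pos) (pos_of_mul_pos_left hxa (ha j hj))
  have hlhs : ∑ i ∈ s, x i * (B * a i) = B * ∑ i ∈ s, x i * a i := by
    rw [mul_sum]; exact sum_congr rfl fun i _ => by ring
  have hrhs : ∑ i ∈ s, x i * (g * w i) = g * ∑ i ∈ s, w i * x i := by
    rw [mul_sum]; exact sum_congr rfl fun i _ => by ring
  nlinarith

section Cover

variable {α ι : Type*} [DecidableEq α]

theorem sum_sum_filter_mem_eq_sum_mul_card_inter [Fintype ι] (S : ι → Finset α)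
    (x : ι → ℝ) (s : Finset α) :
    ∑ e ∈ s, ∑ i ∈ univ.filter (fun i => e ∈ S i), x i = ∑ i, x i * #(S i ∩ s) := by
  rw [sum_comm' (t' := univ) (s' := fun i => S i ∩ s) (fun e i => by
    simp only [mem_filter, mem_univ, true_and, mem_inter, and_comm])]
  simp only [sum_const, nsmul_eq_mul, mul_comm]

theorem sum_sub_card_le_sum_mul_card_sdiff [Fintype α] [Fintype ι] (S : ι → Finset α)
    (x : ι → ℝ) {z : α → ℝ}
    (hz : ∀ e, z e ≤ min 1 (∑ i ∈ univ.filter (fun i => e ∈ S i), x i))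
    (C : Finset α) :
    ∑ e, z e - #C ≤ ∑ i, x i * #(S i \ C) := by
  have hC : ∑ e ∈ C, z e ≤ #C := by
    simpa using sum_le_sum fun e (_ : e ∈ C) => (hz e).trans (min_le_left _ _)
  have hout : ∑ e ∈ Cᶜ, z e ≤ ∑ i, x i * #(S i \ C) := by
    simp_rw [sdiff_eq_inter_compl, ← sum_sum_filter_mem_eq_sum_mul_card_inter]
    exact sum_le_sum fun e _ => (hz e).trans (min_le_right _ _)
  have := sum_compl_add_sum C z
  linarith

variable [Fintype α] [DecidableEq ι] (S : ι → Finset α) (w : ι → ℝ) {Z B K θ : ℝ}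

theorem exists_cover_of_forall_exists_mul_le_card_sdiff (hw : ∀ i, 0 ≤ w i) (hB : 0 ≤ B)
    (hθ : 0 < θ) (hK : ∀ i, (#(S i) : ℝ) ≤ K)
    (hstep : ∀ C : Finset α, θ < Z - #C →
      ∃ i, 0 < #(S i \ C) ∧ (Z - #C) * w i ≤ B * #(S i \ C))
    (C : Finset α) (hC : θ < Z - #C) :
    ∃ T : Finset ι, Z - θ ≤ #(C ∪ T.biUnion S) ∧
      ∑ i ∈ T, w i ≤ B * (log (Z - #C) - log θ) + B * K / θ := by
  induction hn : #(univ \ C) using Nat.strong_induction_on generalizing C with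
  | _ n ih =>
    obtain ⟨i, hnew, hwi⟩ := hstep C hC
    have hg : 0 < Z - #C := hθ.trans hC
    have hunion : (#(C ∪ S i) : ℝ) = #C + #(S i \ C) := by
      rw [union_comm, ← card_sdiff_add_card]; push_cast; ring
    have hwi_le : w i ≤ B * #(S i \ C) / (Z - #C) := by
      rw [le_div_iff₀ hg]; linarith
    by_cases hnext : θ < Z - #(C ∪ S i)
    · have hsub : univ \ (C ∪ S i) ⊂ univ \ C := by
        obtain ⟨e, he⟩ := card_pos.mp hnew
        rw [mem_sdiff] at he
        refine ssubset_iff_of_subset (sdiff_subset_sdiff subset_rfl subset_union_left) |>.mpr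
          ⟨e, by simp [he.2], by simp [he.1]⟩
      obtain ⟨T, hcov, hwT⟩ := ih _ (hn ▸ card_lt_card hsub) (C ∪ S i) hnext rfl
      refine ⟨insert i T, by rwa [biUnion_insert, ← union_assoc], ?_⟩
      have hlog := sub_div_le_log_sub_log (hθ.trans hnext)
        (by linarith : Z - #(C ∪ S i) ≤ Z - #C)
      rw [show Z - #C - (Z - #(C ∪ S i)) = #(S i \ C) by rw [hunion]; ring] at hlog
      have hlog' : B * #(S i \ C) / (Z - #C) ≤ B * (log (Z - #C) - log (Z - #(C ∪ S i))) := by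
        rw [mul_div_assoc]
        exact mul_le_mul_of_nonneg_left hlog hB
      have hins : ∑ j ∈ insert i T, w j ≤ w i + ∑ j ∈ T, w j := by
        by_cases hi : i ∈ T
        · rw [insert_eq_of_mem hi]; linarith [hw i]
        · rw [sum_insert hi]
      linarith
    · refine ⟨{i}, by simp only [singleton_biUnion]; linarith, ?_⟩
      have hnewK : (#(S i \ C) : ℝ) ≤ K :=
        (Nat.cast_le.mpr (card_le_card sdiff_subset)).trans (hK i)
      have hK' : B * #(S i \ C) / (Z - #C) ≤ B * K / θ :=
        div_le_div₀ (mul_nonneg hB ((Nat.cast_nonneg _).trans hnewK))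
          (mul_le_mul_of_nonneg_left hnewK hB) hθ hC.le
      have hlog : 0 ≤ log (Z - #C) - log θ := sub_nonneg.mpr (log_le_log hθ hC.le)
      rw [sum_singleton]
      nlinarith

end Cover

theorem greedy_budgeted_max_coverage_small_sets_general
    {α : Type*} [Fintype α] [DecidableEq α] {m : ℕ}
    (S : Fin m → Finset α) (w : Fin m → ℝ) (hw : ∀ i, 0 ≤ w i)
    (B : ℝ)
    (x : Fin m → ℝ) (z : α → ℝ)
    (hx : ∀ i, 0 ≤ x i)
    (hz : ∀ e, z e ≤ min 1 (∑ i ∈ Finset.univ.filter (fun i => e ∈ S i), x i))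
    (hbudget : ∑ i, w i * x i ≤ B)
    (c : ℝ) (hc : 0 < c)
    (hsmall : ∀ i, ((S i).card : ℝ) ≤ c * ∑ e, z e) :
    ∃ T : Finset (Fin m),
      (1 - 1 / Real.exp 1) * (∑ e, z e) ≤ ((T.biUnion S).card : ℝ) ∧
      ∑ i ∈ T, w i ≤ (1 + Real.exp 1 * c) * B := by
  have hB : 0 ≤ B := (sum_nonneg fun i _ => mul_nonneg (hw i) (hx i)).trans hbudget
  have he : 1 < exp 1 := one_lt_exp_iff.mpr one_pos
  set Z := ∑ e, z e
  rcases le_or_gt Z 0 with hZ | hZ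
  · refine ⟨∅, ?_, ?_⟩
    · have : 0 ≤ 1 - 1 / exp 1 := sub_nonneg.mpr ((div_le_one (exp_pos 1)).mpr he.le)
      simpa using mul_nonpos_of_nonneg_of_nonpos this hZ
    · simpa using mul_nonneg (by positivity) hB
  have hθ : 0 < Z / exp 1 := div_pos hZ (exp_pos 1)
  have hstep : ∀ C : Finset α, Z / exp 1 < Z - #C →
      ∃ i, 0 < #(S i \ C) ∧ (Z - #C) * w i ≤ B * #(S i \ C) := fun C hC => by
    obtain ⟨i, -, hi⟩ := exists_pos_and_mul_le_of_le_sum_mul univ (fun i _ => hx i)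
      (fun i _ => Nat.cast_nonneg _) (fun i _ => hw i) hB (hθ.trans hC) hbudget
      (sum_sub_card_le_sum_mul_card_sdiff S x hz C)
    exact ⟨i, Nat.cast_pos.mp hi.1, hi.2⟩
  obtain ⟨T, hcov, hwT⟩ := exists_cover_of_forall_exists_mul_le_card_sdiff S w hw hB hθ hsmall
    hstep ∅ (by simpa using div_lt_self hZ he)
  refine ⟨T, by rw [show (1 - 1 / exp 1) * Z = Z - Z / exp 1 by ring]; simpa using hcov,
    hwT.trans_eq ?_⟩
  rw [card_empty, Nat.cast_zero, sub_zero, log_div hZ.ne' (exp_pos 1).ne', log_exp]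
  field_simp
  ring

/-- Greedy for budgeted max coverage when no set is large: if every
set covers at most `c·Z` elements, there is a collection `T` covering at least
`(1 - 1/e)·Z` elements with weight at most `(1 + e·c)·B`. -/
theorem greedy_budgeted_max_coverage_small_sets
    {α : Type*} [Fintype α] [DecidableEq α] {m : ℕ}
    (S : Fin m → Finset α) (w : Fin m → ℝ) (hw : ∀ i, 0 ≤ w i)
    (B : ℝ) (hB : 0 < B)
    (x : Fin m → ℝ) (z : α → ℝ)
    (hx : ∀ i, 0 ≤ x i)
    (hz : ∀ e, z e ≤ min 1 (∑ i ∈ Finset.univ.filter (fun i => e ∈ S i), x i))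
    (hbudget : ∑ i, w i * x i ≤ B)
    (c : ℝ) (hc : 0 < c)
    (hsmall : ∀ i, ((S i).card : ℝ) ≤ c * ∑ e, z e) :
    ∃ T : Finset (Fin m),
      (1 - 1 / Real.exp 1) * (∑ e, z e) ≤ ((T.biUnion S).card : ℝ) ∧
      ∑ i ∈ T, w i ≤ (1 + Real.exp 1 * c) * B :=
  greedy_budgeted_max_coverage_small_sets_general S w hw B x z hx hz hbudget c hc hsmall
end

section
/- Let T be a finite index set and let x_i ∈ [0,1] for each i ∈ T. Then 1 - ∏_{i∈T} (1 - x_i) ≥ (1 - 1/e) · min{1, Σ_{i∈T} x_i}. -/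
/-!
Since `1 - t ≤ exp (-t)`, the product `∏ (1 - x_i)` is at most `exp (-s)` with `s = ∑ x_i`. The
function `s ↦ 1 - exp (-s)` is concave, so on `[0, 1]` it lies above its chord `(1 - 1/e) s`, and for
`s ≥ 1` it is at least its value `1 - 1/e` at `s = 1`.
-/

open Finset Real

theorem prod_one_sub_le_exp_neg_sum {ι : Type*} (T : Finset ι) (x : ι → ℝ)
    (hx : ∀ i ∈ T, x i ≤ 1) : ∏ i ∈ T, (1 - x i) ≤ exp (-∑ i ∈ T, x i) := by
  calc ∏ i ∈ T, (1 - x i) ≤ ∏ i ∈ T, exp (-x i) :=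
        prod_le_prod (fun i hi => sub_nonneg.2 (hx i hi)) fun i _ => one_sub_le_exp_neg (x i)
    _ = exp (-∑ i ∈ T, x i) := by rw [← exp_sum, sum_neg_distrib]

theorem exp_neg_le_one_sub_mul_of_mem_Icc {s : ℝ} (hs : s ∈ Set.Icc (0 : ℝ) 1) :
    exp (-s) ≤ 1 - (1 - exp (-1)) * s := by
  have hchord := convexOn_exp.2 (Set.mem_univ (-1)) (Set.mem_univ 0) hs.1 (sub_nonneg.2 hs.2)
    (add_sub_cancel s 1)
  simp only [smul_eq_mul, mul_neg_one, mul_zero, add_zero, exp_zero, mul_one] at hchord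
  linarith

theorem one_sub_exp_neg_one_mul_min_le {s : ℝ} (hs : 0 ≤ s) :
    (1 - exp (-1)) * min 1 s ≤ 1 - exp (-s) := by
  rcases le_total s 1 with hs1 | hs1
  · rw [min_eq_right hs1]
    linarith [exp_neg_le_one_sub_mul_of_mem_Icc ⟨hs, hs1⟩]
  · rw [min_eq_left hs1, mul_one]
    linarith [exp_le_exp.2 (neg_le_neg hs1)]

/-- Pointwise comparison of the multilinear and concave-closure
extensions of a rank-one coverage function:
`1 - ∏_{i∈T} (1 - x_i) ≥ (1 - 1/e) · min{1, Σ_{i∈T} x_i}` for `x_i ∈ [0,1]`. -/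
theorem one_sub_prod_ge_min
    {ι : Type*} (T : Finset ι) (x : ι → ℝ)
    (hx : ∀ i ∈ T, x i ∈ Set.Icc (0:ℝ) 1) :
    (1 - 1 / Real.exp 1) * min 1 (∑ i ∈ T, x i) ≤ 1 - ∏ i ∈ T, (1 - x i) := by
  have hsum : 0 ≤ ∑ i ∈ T, x i := sum_nonneg fun i hi => (hx i hi).1
  have hprod := prod_one_sub_le_exp_neg_sum T x fun i hi => (hx i hi).2
  rw [one_div, ← exp_neg]
  linarith [one_sub_exp_neg_one_mul_min_le hsum]
end

section
/- Let N be a finite ground set with weights w: N → ℝ≥0, and for j = 1,...,h let f_j : 2^N → ℝ≥0 be normalized monotone submodular functions (f_j(∅) = 0). For each j let N_j = { i ∈ N : f_j({i}) > 0 } be the active elements of constraint j, and suppose each i ∈ N lies in at most r of the sets N_j (r-sparsity). Let S* ⊆ N satisfy f_j(S*) ≥ 1 for all j. Then there exist sets T_1, ..., T_h ⊆ N with f_j(T_j) ≥ 1 for every j and Σ_{j=1}^h w(T_j) ≤ r · w(S*). Consequently, writing opt_j for the minimum of w(T) over T with f_j(T) ≥ 1, we have Σ_{j=1}^h opt_j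 ≤ r · w(S*). -/
/-!
Take `T_j` to be the elements of `S*` that are active for `f_j`. Submodularity with
`f_j ∅ = 0` gives `f_j (insert a S) ≤ f_j S + f_j {a}` for `a ∉ S`, so discarding the inactive
elements of `S*` does not decrease `f_j`, and `T_j` still covers constraint `j`. By sparsity every
element of `S*` lies in at most `r` of the `T_j`, whence `Σ_j w(T_j) ≤ r · w(S*)`.
-/

open Finset

theorem apply_union_le_of_singleton_nonpos {α : Type*} [DecidableEq α]
    (g : Finset α → ℝ) (hnormal : g ∅ = 0)
    (hsubmod : ∀ A B : Finset α, g (A ∪ B) + g (A ∩ B) ≤ g A + g B)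
    (B D : Finset α) (hD : ∀ i ∈ D, g {i} ≤ 0) :
    g (B ∪ D) ≤ g B := by
  induction D using Finset.induction_on with
  | empty => simp
  | @insert a D _ ih =>
    have ih := ih fun i hi => hD i (mem_insert_of_mem hi)
    rw [union_insert]
    by_cases ha : a ∈ B ∪ D
    · rwa [insert_eq_self.2 ha]
    · have hsub := hsubmod {a} (B ∪ D)
      rw [singleton_inter_of_notMem ha, hnormal, ← insert_eq] at hsub
      linarith [hD a (mem_insert_self a D)]

theorem apply_le_apply_filter_singleton_pos {α : Type*} [DecidableEq α]
    (g : Finset α → ℝ) (hnormal : g ∅ = 0)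
    (hsubmod : ∀ A B : Finset α, g (A ∪ B) + g (A ∩ B) ≤ g A + g B) (S : Finset α) :
    g S ≤ g (S.filter fun i => 0 < g {i}) := by
  have hsplit := filter_union_filter_not_eq (fun i => 0 < g {i}) S
  have := apply_union_le_of_singleton_nonpos g hnormal hsubmod (S.filter fun i => 0 < g {i})
    (S.filter fun i => ¬ 0 < g {i}) fun i hi => not_lt.1 (mem_filter.1 hi).2
  rwa [hsplit] at this

theorem sum_sum_filter_le_mul {ι α : Type*} [Fintype ι] (p : ι → α → Prop)
    [∀ j, DecidablePred (p j)] (w : α → ℝ) (hw : ∀ i, 0 ≤ w i) (r : ℕ)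
    (hsparse : ∀ i, #{j | p j i} ≤ r) (S : Finset α) :
    ∑ j, ∑ i ∈ S.filter (p j), w i ≤ r * ∑ i ∈ S, w i := by
  calc ∑ j, ∑ i ∈ S.filter (p j), w i
      = ∑ i ∈ S, (#{j | p j i} : ℝ) * w i := by
        simp only [sum_filter]
        rw [sum_comm]
        refine sum_congr rfl fun i _ => ?_
        rw [← sum_filter, sum_const, nsmul_eq_mul]
    _ ≤ ∑ i ∈ S, (r : ℝ) * w i :=
        sum_le_sum fun i _ => mul_le_mul_of_nonneg_right (by exact_mod_cast hsparse i) (hw i)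
    _ = r * ∑ i ∈ S, w i := (mul_sum S w r).symm

theorem sparse_sum_of_opts_general
    {α : Type*} [DecidableEq α] {h : ℕ}
    (w : α → ℝ) (hw : ∀ i, 0 ≤ w i)
    (f : Fin h → Finset α → ℝ)
    (hnormal : ∀ j, f j ∅ = 0)
    (hsubmod : ∀ j (A B : Finset α), f j (A ∪ B) + f j (A ∩ B) ≤ f j A + f j B)
    (r : ℕ)
    (hsparse : ∀ i : α,
      (Finset.univ.filter (fun j : Fin h => 0 < f j {i})).card ≤ r)
    (Sstar : Finset α) (hSstar : ∀ j, 1 ≤ f j Sstar) :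
    (∃ T : Fin h → Finset α, (∀ j, 1 ≤ f j (T j)) ∧
        ∑ j, ∑ i ∈ T j, w i ≤ (r : ℝ) * ∑ i ∈ Sstar, w i) ∧
      ∀ opt : Fin h → ℝ,
        (∀ j, IsLeast {c : ℝ | ∃ T : Finset α, 1 ≤ f j T ∧ c = ∑ i ∈ T, w i} (opt j)) →
        ∑ j, opt j ≤ (r : ℝ) * ∑ i ∈ Sstar, w i := by
  set T : Fin h → Finset α := fun j => Sstar.filter fun i => 0 < f j {i}
  have hcover (j : Fin h) : 1 ≤ f j (T j) :=
    (hSstar j).trans (apply_le_apply_filter_singleton_pos (f j) (hnormal j) (hsubmod j) Sstar)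
  have hweight : ∑ j, ∑ i ∈ T j, w i ≤ (r : ℝ) * ∑ i ∈ Sstar, w i :=
    sum_sum_filter_le_mul (fun j i => 0 < f j {i}) w hw r hsparse Sstar
  refine ⟨⟨T, hcover, hweight⟩, fun opt hopt => ?_⟩
  calc ∑ j, opt j ≤ ∑ j, ∑ i ∈ T j, w i :=
        sum_le_sum fun j _ => (hopt j).2 ⟨T j, hcover j, rfl⟩
    _ ≤ _ := hweight

/-- Sparsity bound for multiple submodular covering constraints:
if every ground element is active in at most `r` of the `h` normalized monotone
submodular covering constraints, and `S*` satisfies all of them, then one can satisfy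
each constraint `j` separately by a set `T_j` with total weight at most `r·w(S*)`;
consequently `Σ_j opt_j ≤ r·w(S*)`. -/
theorem sparse_sum_of_opts
    {α : Type*} [DecidableEq α] [Fintype α] {h : ℕ}
    (w : α → ℝ) (hw : ∀ i, 0 ≤ w i)
    (f : Fin h → Finset α → ℝ)
    (hnormal : ∀ j, f j ∅ = 0)
    (hnonneg : ∀ j A, 0 ≤ f j A)
    (hmono : ∀ j (A B : Finset α), A ⊆ B → f j A ≤ f j B)
    (hsubmod : ∀ j (A B : Finset α), f j (A ∪ B) + f j (A ∩ B) ≤ f j A + f j B)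
    (r : ℕ)
    (hsparse : ∀ i : α,
      (Finset.univ.filter (fun j : Fin h => 0 < f j {i})).card ≤ r)
    (Sstar : Finset α) (hSstar : ∀ j, 1 ≤ f j Sstar) :
    (∃ T : Fin h → Finset α, (∀ j, 1 ≤ f j (T j)) ∧
        ∑ j, ∑ i ∈ T j, w i ≤ (r : ℝ) * ∑ i ∈ Sstar, w i) ∧
      ∀ opt : Fin h → ℝ,
        (∀ j, IsLeast {c : ℝ | ∃ T : Finset α, 1 ≤ f j T ∧ c = ∑ i ∈ T, w i} (opt j)) →
        ∑ j, opt j ≤ (r : ℝ) * ∑ i ∈ Sstar, w i :=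
  sparse_sum_of_opts_general w hw f hnormal hsubmod r hsparse Sstar hSstar
end

section
/- Let (U, S_1, ..., S_m) be a finite set system with element weights A_e ∈ [0,1], and let f(X) = Σ_{e ∈ ∪_{i∈X} S_i} A_e be the associated weighted coverage function on {1,...,m}. Let D ⊆ {1,...,m}, let b' > 0, let 0 < τ < 1, and for i ∉ D write m_i = f(D ∪ {i}) - f(D). Let H = { i ∉ D : m_i ≥ b' } and L = { i ∉ D : 0 < m_i < b' }. Suppose x_i ≥ 0 satisfies the knapsack-cover inequality Σ_{i ∉ D} min{m_i, b'}·x_i ≥ b', and suppose Σ_{i∈H} x_i/τ < 1/2. Let U' = U \ ∪_{i∈D} S_i and for e ∈ U' let z''_e = Σ_{i ∈ L : e ∈ S_i} x_i/τ. Then Σ_{e ∈ U'} A_e · z''_e ≥ b'/(2τ). -/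
/-! The marginal gain `m_i = f(D ∪ {i}) - f(D)` is the weight of the part of `S_i` left uncovered
by `D`, so exchanging the order of summation turns `Σ_{e ∈ U'} A_e z''_e` into
`Σ_{i ∈ L} m_i x_i / τ`. In the knapsack-cover inequality the heavy sets contribute at most
`b' Σ_H x_i < b' τ / 2 ≤ b' / 2` and the sets with `m_i ≤ 0` nothing positive, so
`Σ_L m_i x_i ≥ b' / 2`. -/

open Finset

/-- Weighted coverage function of a set system: `cover S A X = Σ_{e ∈ ∪_{i∈X} S_i} A_e`. -/
noncomputable def cover {α : Type*} [DecidableEq α] {m : ℕ}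
    (S : Fin m → Finset α) (A : α → ℝ) (X : Finset (Fin m)) : ℝ :=
  ∑ e ∈ X.biUnion S, A e

section Coverage

variable {α : Type*} [DecidableEq α] {m : ℕ} (S : Fin m → Finset α) (A : α → ℝ)

theorem cover_insert_sub_cover (D : Finset (Fin m)) (i : Fin m) :
    cover S A (insert i D) - cover S A D = ∑ e ∈ S i \ D.biUnion S, A e := by
  unfold cover
  rw [biUnion_insert, ← sdiff_union_self_eq_union, sum_union sdiff_disjoint]
  ring

theorem sum_uncovered_mul_sum_filter_mem [Fintype α] (D L : Finset (Fin m)) (y : Fin m → ℝ) :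
    ∑ e ∈ univ \ D.biUnion S, A e * ∑ i ∈ L.filter (fun i => e ∈ S i), y i =
      ∑ i ∈ L, (cover S A (insert i D) - cover S A D) * y i := by
  simp_rw [cover_insert_sub_cover, mul_sum, sum_mul]
  refine sum_comm' fun e i => ?_
  simp only [mem_sdiff, mem_univ, true_and, mem_filter]
  tauto

end Coverage

theorem sum_min_mul_le_heavy_add_light {ι : Type*} (s : Finset ι) (g x : ι → ℝ) (b : ℝ)
    (hx : ∀ i ∈ s, 0 ≤ x i) :
    ∑ i ∈ s, min (g i) b * x i ≤
      b * ∑ i ∈ s.filter (fun i => b ≤ g i), x i +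
        ∑ i ∈ s.filter (fun i => 0 < g i ∧ g i < b), g i * x i := by
  rw [mul_sum, sum_filter, sum_filter, ← sum_add_distrib]
  refine sum_le_sum fun i hi => ?_
  by_cases hheavy : b ≤ g i
  · have hlight : ¬(0 < g i ∧ g i < b) := fun h => (h.2.trans_le hheavy).false
    simp [hheavy, hlight]
  by_cases hlight : 0 < g i ∧ g i < b
  · simp [hheavy, hlight, hlight.2.le]
  · have hg : g i ≤ 0 := by
      by_contra h
      exact hlight ⟨not_le.mp h, not_le.mp hheavy⟩
    rw [min_eq_left (not_le.mp hheavy).le]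
    simpa [hheavy, hlight] using mul_nonpos_of_nonpos_of_nonneg hg (hx i hi)

theorem light_sets_cover_residual_general
    {α : Type*} [Fintype α] [DecidableEq α] {m : ℕ}
    (S : Fin m → Finset α) (A : α → ℝ)
    (D : Finset (Fin m)) (b' τ : ℝ) (hb' : 0 < b') (hτ0 : 0 < τ) (hτ1 : τ < 1)
    (x : Fin m → ℝ) (hx : ∀ i, 0 ≤ x i)
    (hKC : b' ≤ ∑ i ∈ Finset.univ \ D,
      min (cover S A (insert i D) - cover S A D) b' * x i)
    (hH : ∑ i ∈ (Finset.univ \ D).filter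
        (fun i => b' ≤ cover S A (insert i D) - cover S A D), x i / τ < 1 / 2) :
    b' / (2 * τ) ≤
      ∑ e ∈ Finset.univ \ D.biUnion S,
        A e * ∑ i ∈ ((Finset.univ \ D).filter
          (fun i => 0 < cover S A (insert i D) - cover S A D ∧
            cover S A (insert i D) - cover S A D < b')).filter (fun i => e ∈ S i),
          x i / τ := by
  set g : Fin m → ℝ := fun i => cover S A (insert i D) - cover S A D
  set H := (univ \ D).filter (fun i => b' ≤ g i)
  set L := (univ \ D).filter (fun i => 0 < g i ∧ g i < b')
  have hHmass : ∑ i ∈ H, x i < τ / 2 := by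
    rw [← sum_div, div_lt_iff₀ hτ0] at hH
    linarith
  have hLmass : b' / 2 ≤ ∑ i ∈ L, g i * x i := by
    have hsplit := hKC.trans (sum_min_mul_le_heavy_add_light (univ \ D) g x b' fun i _ => hx i)
    linarith [mul_lt_mul_of_pos_left hHmass hb', mul_lt_mul_of_pos_left hτ1 hb']
  rw [sum_uncovered_mul_sum_filter_mem]
  calc b' / (2 * τ) = b' / 2 / τ := by ring
    _ ≤ (∑ i ∈ L, g i * x i) / τ := by gcongr
    _ = ∑ i ∈ L, g i * (x i / τ) := by simp_rw [sum_div, mul_div_assoc]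

/-- Key claim for fixing an unsatisfied constraint: if the KC
inequality holds with respect to `D` and the scaled fractional mass on the heavy sets
`H` is less than `1/2`, then the light sets `L` fractionally cover the residual
requirement to extent `b'/(2τ)` on the residual universe. -/
theorem light_sets_cover_residual
    {α : Type*} [Fintype α] [DecidableEq α] {m : ℕ}
    (S : Fin m → Finset α) (A : α → ℝ) (hA : ∀ e, A e ∈ Set.Icc (0:ℝ) 1)
    (D : Finset (Fin m)) (b' τ : ℝ) (hb' : 0 < b') (hτ0 : 0 < τ) (hτ1 : τ < 1)
    (x : Fin m → ℝ) (hx : ∀ i, 0 ≤ x i)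
    (hKC : b' ≤ ∑ i ∈ Finset.univ \ D,
      min (cover S A (insert i D) - cover S A D) b' * x i)
    (hH : ∑ i ∈ (Finset.univ \ D).filter
        (fun i => b' ≤ cover S A (insert i D) - cover S A D), x i / τ < 1 / 2) :
    b' / (2 * τ) ≤
      ∑ e ∈ Finset.univ \ D.biUnion S,
        A e * ∑ i ∈ ((Finset.univ \ D).filter
          (fun i => 0 < cover S A (insert i D) - cover S A D ∧
            cover S A (insert i D) - cover S A D < b')).filter (fun i => e ∈ S i),
          x i / τ :=
  light_sets_cover_residual_general S A D b' τ hb' hτ0 hτ1 x hx hKC hH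
end

section
/- Let (U, S_1, ..., S_m) be a finite set system with element weights A_e ≥ 0, and let g(T) = Σ_{e ∈ ∪_{i∈T} S_i} A_e be the associated weighted coverage function. Let b > 0, suppose g({i}) ≤ b for every i ∈ {1,...,m}, and let x ∈ [0,1]^m satisfy G(x) ≥ 2b, where G(x) = Σ_{e∈U} A_e · (1 - ∏_{i : e ∈ S_i} (1 - x_i)) is the multilinear extension of g. Let R ⊆ {1,...,m} be a random set obtained by including each index i independently with probability x_i. Then Pr[g(R) < b] ≤ e^{-1/4}. -/
/-!
Round the coordinates one at a time. With `y⁽ᵏ⁾` the point whose first `k` coordinates are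
rounded, `g(R) - G(x)` telescopes into `∑ₖ (ωₖ - xₖ) cₖ`, where `cₖ = ∂ₖG(y⁽ᵏ⁾) ∈ [0, b]`
depends only on the earlier coordinates, and submodularity gives `∑ₖ xₖ cₖ ≤ G(x)`.
The exponential supermartingale built from these increments gives the lower tail
`Pr[g(R) - G(x) ≤ -s] ≤ exp(-s² / (2 b G(x)))`; take `s = G(x)/2 ≥ b`.
-/

open Finset MeasureTheory Real

/-- A Bernstein-type bound on the moment generating function of `-(ξ - p) c` for
`ξ ~ Bernoulli p`, from `e^{-u} ≤ 1 - u + u²/2`. -/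
theorem bernoulli_mgf_le {p c b t : ℝ} (hp0 : 0 ≤ p) (hc0 : 0 ≤ c) (hcb : c ≤ b)
    (ht : 0 ≤ t) :
    (1 - p) * exp (t * p * c) + p * exp (-(t * (1 - p) * c)) ≤ exp (t ^ 2 * b * p * c / 2) := by
  have hsplit : (1 - p) * exp (t * p * c) + p * exp (-(t * (1 - p) * c))
      = exp (t * p * c) * (1 - p * (1 - exp (-(t * c)))) := by
    rw [show -(t * (1 - p) * c) = t * p * c + -(t * c) by ring, exp_add]; ring
  have hquad : exp (-(t * c)) ≤ 1 - t * c + (t * c) ^ 2 / 2 := by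
    have hpos : 0 < 1 - t * c + (t * c) ^ 2 / 2 := by nlinarith [sq_nonneg (t * c - 1)]
    rw [exp_neg, inv_le_iff_one_le_mul₀ (exp_pos _)]
    -- `(1 - u + u²/2) (1 + u + u²/2) = 1 + u⁴/4` and `1 + u + u²/2 ≤ eᵘ`
    nlinarith [mul_le_mul_of_nonneg_left (quadratic_le_exp_of_nonneg (mul_nonneg ht hc0)) hpos.le,
      pow_nonneg (mul_nonneg ht hc0) 4]
  calc _ = exp (t * p * c) * (1 - p * (1 - exp (-(t * c)))) := hsplit
    _ ≤ exp (t * p * c) * exp (-(p * (1 - exp (-(t * c))))) := by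
        gcongr; exact one_sub_le_exp_neg _
    _ ≤ exp (t ^ 2 * b * p * c / 2) := by
        rw [← exp_add]
        gcongr
        nlinarith [mul_le_mul_of_nonneg_left hquad hp0,
          mul_nonneg (mul_nonneg hp0 (sq_nonneg t)) (mul_nonneg hc0 (sub_nonneg.2 hcb))]

section Bernoulli

variable {m : ℕ}

def bernoulliWeight (p : Fin m → ℝ) (ω : Fin m → Bool) : ℝ :=
  ∏ i, if ω i then p i else 1 - p i

theorem bernoulliWeight_nonneg {p : Fin m → ℝ} (hp : ∀ i, p i ∈ Set.Icc (0 : ℝ) 1)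
    (ω : Fin m → Bool) : 0 ≤ bernoulliWeight p ω :=
  prod_nonneg fun i _ => by split_ifs <;> linarith [(hp i).1, (hp i).2]

theorem bernoulliWeight_snoc (p : Fin (m + 1) → ℝ) (ω : Fin m → Bool) (v : Bool) :
    bernoulliWeight p (Fin.snoc ω v) =
      bernoulliWeight (fun i => p i.castSucc) ω *
        if v then p (Fin.last m) else 1 - p (Fin.last m) := by
  simp [bernoulliWeight, Fin.prod_univ_castSucc]

/-- The partial products of adapted nonnegative factors with conditional mean at most one form a
supermartingale; conditioning on all but the last coordinate gives the induction step. -/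
theorem sum_bernoulliWeight_mul_prod_le_one (p : Fin m → ℝ) (hp : ∀ i, p i ∈ Set.Icc (0 : ℝ) 1)
    (χ : Fin m → (Fin m → Bool) → ℝ) (hχ : ∀ i ω, 0 ≤ χ i ω)
    (hadapted : ∀ i j ω v, i < j → χ i (Function.update ω j v) = χ i ω)
    (havg : ∀ i ω,
      (1 - p i) * χ i (Function.update ω i false) + p i * χ i (Function.update ω i true) ≤ 1) :
    ∑ ω, bernoulliWeight p ω * ∏ i, χ i ω ≤ 1 := by
  induction m with
  | zero => simp [bernoulliWeight]
  | succ m ih =>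
    set χ' : Fin m → (Fin m → Bool) → ℝ := fun i ω => χ i.castSucc (Fin.snoc ω false)
    have hχ' (ω : Fin m → Bool) (v : Bool) (i : Fin m) :
        χ i.castSucc (Fin.snoc ω v) = χ' i ω := by
      rw [← Fin.update_snoc_last, hadapted _ _ _ _ (Fin.castSucc_lt_last i)]
    have hlast (ω : Fin m → Bool) :
        ∑ v, (if v then p (Fin.last m) else 1 - p (Fin.last m)) * χ (Fin.last m) (Fin.snoc ω v)
          ≤ 1 := by
      simpa only [Fintype.sum_bool, Fin.update_snoc_last, if_true, Bool.false_eq_true, if_false,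
        add_comm] using havg (Fin.last m) (Fin.snoc ω false)
    have hIH : ∑ ω, bernoulliWeight (fun i => p i.castSucc) ω * ∏ i, χ' i ω ≤ 1 := by
      refine ih _ (fun i => hp _) χ' (fun i ω => hχ _ _) (fun i j ω v hij => ?_) (fun i ω => ?_)
      · simp only [χ', Fin.snoc_update]
        exact hadapted _ _ _ _ (Fin.castSucc_lt_castSucc_iff.2 hij)
      · simpa only [χ', Fin.snoc_update] using havg i.castSucc (Fin.snoc ω false)
    calc ∑ ω, bernoulliWeight p ω * ∏ i, χ i ω
        = ∑ ω, bernoulliWeight (fun i => p i.castSucc) ω * (∏ i, χ' i ω) *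
            ∑ v, (if v then p (Fin.last m) else 1 - p (Fin.last m)) *
              χ (Fin.last m) (Fin.snoc ω v) := by
          rw [← Fintype.sum_equiv (Fin.snocEquiv fun _ => Bool)
            (fun vω => bernoulliWeight p (Fin.snoc vω.2 vω.1) * ∏ i, χ i (Fin.snoc vω.2 vω.1)) _
            fun _ => rfl, Fintype.sum_prod_type, sum_comm]
          refine sum_congr rfl fun ω _ => ?_
          simp only [bernoulliWeight_snoc, Fin.prod_univ_castSucc, hχ', mul_sum]
          exact sum_congr rfl fun v _ => by ring
      _ ≤ ∑ ω, bernoulliWeight (fun i => p i.castSucc) ω * ∏ i, χ' i ω := by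
          refine sum_le_sum fun ω _ => mul_le_of_le_one_right ?_ (hlast ω)
          exact mul_nonneg (bernoulliWeight_nonneg (fun i => hp _) ω)
            (prod_nonneg fun i _ => hχ _ _)
      _ ≤ 1 := hIH

theorem sum_bernoulliWeight_mul_exp_le_one {p : Fin m → ℝ} (hp : ∀ i, p i ∈ Set.Icc (0 : ℝ) 1)
    {c : Fin m → (Fin m → Bool) → ℝ} {b t : ℝ} (hc0 : ∀ i ω, 0 ≤ c i ω) (hcb : ∀ i ω, c i ω ≤ b)
    (hpredictable : ∀ i j ω v, i ≤ j → c i (Function.update ω j v) = c i ω) (ht : 0 ≤ t) :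
    ∑ ω, bernoulliWeight p ω *
      exp (-(t * ∑ i, ((ω i).toNat - p i) * c i ω) - t ^ 2 * b / 2 * ∑ i, p i * c i ω) ≤ 1 := by
  set χ : Fin m → (Fin m → Bool) → ℝ := fun i ω =>
    exp (-(t * ((ω i).toNat - p i) * c i ω) - t ^ 2 * b / 2 * (p i * c i ω))
  have hχ (ω : Fin m → Bool) :
      exp (-(t * ∑ i, ((ω i).toNat - p i) * c i ω) - t ^ 2 * b / 2 * ∑ i, p i * c i ω)
        = ∏ i, χ i ω := by
    simp only [χ, ← exp_sum, mul_sum, ← sum_neg_distrib, ← sum_sub_distrib, mul_assoc]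
  simp only [hχ]
  refine sum_bernoulliWeight_mul_prod_le_one p hp χ (fun _ _ => (exp_pos _).le)
    (fun i j ω v hij => ?_) (fun i ω => ?_)
  · simp only [χ, Function.update_of_ne hij.ne, hpredictable i j ω v hij.le]
  · have hmgf := bernoulli_mgf_le (hp i).1 (hc0 i ω) (hcb i ω) ht
    simp only [χ, Function.update_self, hpredictable i i ω _ le_rfl, Bool.toNat_false,
      Bool.toNat_true, Nat.cast_zero, Nat.cast_one]
    have hq : t ^ 2 * b / 2 * (p i * c i ω) = t ^ 2 * b * p i * c i ω / 2 := by ring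
    have hp' : -(t * (0 - p i) * c i ω) = t * p i * c i ω := by ring
    rw [hq, hp', exp_sub, exp_sub, mul_div_assoc', mul_div_assoc', ← add_div,
      div_le_one (exp_pos _)]
    exact hmgf

theorem sum_indicator_bernoulliWeight_le {p : Fin m → ℝ} (hp : ∀ i, p i ∈ Set.Icc (0 : ℝ) 1)
    {c : Fin m → (Fin m → Bool) → ℝ} {b V s : ℝ} (hb : 0 < b) (hc0 : ∀ i ω, 0 ≤ c i ω)
    (hcb : ∀ i ω, c i ω ≤ b)
    (hpredictable : ∀ i j ω v, i ≤ j → c i (Function.update ω j v) = c i ω)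
    (hV : 0 < V) (hpcV : ∀ ω, ∑ i, p i * c i ω ≤ V) (hs : 0 ≤ s) :
    ∑ ω, {ω | ∑ i, ((ω i).toNat - p i) * c i ω ≤ -s}.indicator (bernoulliWeight p) ω
      ≤ exp (-(s ^ 2 / (2 * b * V))) := by
  set t := s / (b * V)
  have ht : 0 ≤ t := by positivity
  have hmarkov (ω : Fin m → Bool) :
      {ω | ∑ i, ((ω i).toNat - p i) * c i ω ≤ -s}.indicator (bernoulliWeight p) ω
        ≤ exp (-(s ^ 2 / (2 * b * V))) * (bernoulliWeight p ω *
          exp (-(t * ∑ i, ((ω i).toNat - p i) * c i ω) - t ^ 2 * b / 2 * ∑ i, p i * c i ω)) := by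
    have hw := bernoulliWeight_nonneg hp ω
    by_cases hω : ω ∈ {ω | ∑ i, ((ω i).toNat - p i) * c i ω ≤ -s}
    · rw [Set.indicator_of_mem hω, mul_left_comm, ← exp_add]
      refine le_mul_of_one_le_right hw (one_le_exp ?_)
      have hX := mul_le_mul_of_nonneg_left (hω) ht
      have hpc := mul_le_mul_of_nonneg_left (hpcV ω) (by positivity : 0 ≤ t ^ 2 * b / 2)
      have hval : t * s - t ^ 2 * b / 2 * V = s ^ 2 / (2 * b * V) := by
        simp only [t]; field_simp; ring
      linarith
    · rw [Set.indicator_of_notMem hω]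
      positivity
  calc _ ≤ ∑ ω, exp (-(s ^ 2 / (2 * b * V))) * (bernoulliWeight p ω *
          exp (-(t * ∑ i, ((ω i).toNat - p i) * c i ω) - t ^ 2 * b / 2 * ∑ i, p i * c i ω)) :=
        sum_le_sum fun ω _ => hmarkov ω
    _ ≤ exp (-(s ^ 2 / (2 * b * V))) := by
        rw [← mul_sum]
        exact mul_le_of_le_one_right (exp_pos _).le
          (sum_bernoulliWeight_mul_exp_le_one hp hc0 hcb hpredictable ht)

theorem pi_bernoulli_singleton {p : Fin m → ℝ} (hp : ∀ i, p i ∈ Set.Icc (0 : ℝ) 1)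
    (ω : Fin m → Bool) :
    Measure.pi (fun i => (PMF.bernoulli (p i).toNNReal
        (by simpa using Real.toNNReal_le_one.mpr (hp i).2)).toMeasure) {ω}
      = ENNReal.ofReal (bernoulliWeight p ω) := by
  rw [Measure.pi_singleton, bernoulliWeight,
    ENNReal.ofReal_prod_of_nonneg fun i _ => by split_ifs <;> linarith [(hp i).1, (hp i).2]]
  refine prod_congr rfl fun i _ => ?_
  rw [PMF.toMeasure_apply_singleton _ _ (measurableSet_singleton _), PMF.bernoulli_apply]
  cases ω i
  · simp [ENNReal.ofReal_sub _ (hp i).1]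
    rfl
  · simp [ENNReal.ofReal]

theorem pi_bernoulli_apply {p : Fin m → ℝ} (hp : ∀ i, p i ∈ Set.Icc (0 : ℝ) 1)
    (E : Set (Fin m → Bool)) :
    Measure.pi (fun i => (PMF.bernoulli (p i).toNNReal
        (by simpa using Real.toNNReal_le_one.mpr (hp i).2)).toMeasure) E
      = ENNReal.ofReal (∑ ω, E.indicator (bernoulliWeight p) ω) := by
  classical
  rw [← E.coe_toFinset, ← sum_measure_singleton, sum_indicator_eq_sum_filter,
    ENNReal.ofReal_sum_of_nonneg fun ω _ => bernoulliWeight_nonneg hp ω]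
  simp only [pi_bernoulli_singleton hp]
  congr 1
  ext
  simp

end Bernoulli

section Coverage

variable {α ι : Type*} [DecidableEq α] [Fintype ι] (S : ι → Finset α) (A : α → ℝ)

def coverageExt [Fintype α] (y : ι → ℝ) : ℝ :=
  ∑ e, A e * (1 - ∏ i ∈ univ.filter (fun i => e ∈ S i), (1 - y i))

def coverageDeriv [DecidableEq ι] (y : ι → ℝ) (k : ι) : ℝ :=
  ∑ e ∈ S k, A e * ∏ j ∈ (univ.filter (fun i => e ∈ S i)).erase k, (1 - y j)

theorem coverageExt_indicator [Fintype α] (ω : ι → Bool) :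
    coverageExt S A (fun i => (ω i).toNat)
      = ∑ e ∈ (univ.filter (fun i => ω i = true)).biUnion S, A e := by
  rw [coverageExt, ← univ_inter ((univ.filter _).biUnion S), ← sum_ite_mem]
  refine sum_congr rfl fun e _ => ?_
  split_ifs with he
  · obtain ⟨i, hi, hei⟩ := mem_biUnion.1 he
    rw [prod_eq_zero (mem_filter.2 ⟨mem_univ i, hei⟩) (by simp [(mem_filter.1 hi).2])]
    ring
  · have hcov : ∀ i, e ∈ S i → ω i = false := fun i hei => by
      by_contra hωi
      exact he (mem_biUnion.2 ⟨i, by simpa using hωi, hei⟩)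
    rw [prod_eq_one fun i hi => by simp [hcov i (mem_filter.1 hi).2]]
    ring

theorem coverageExt_zero [Fintype α] : coverageExt S A 0 = 0 := by
  simp [coverageExt]

theorem coverageExt_update_sub [Fintype α] [DecidableEq ι] (y : ι → ℝ) (k : ι) (s t : ℝ) :
    coverageExt S A (Function.update y k t) - coverageExt S A (Function.update y k s)
      = (t - s) * coverageDeriv S A y k := by
  have herase (e : α) (u : ℝ) :
      ∏ j ∈ (univ.filter (fun i => e ∈ S i)).erase k, (1 - Function.update y k u j)
        = ∏ j ∈ (univ.filter (fun i => e ∈ S i)).erase k, (1 - y j) :=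
    prod_congr rfl fun j hj => by rw [Function.update_of_ne (ne_of_mem_erase hj)]
  rw [coverageExt, coverageExt, ← sum_sub_distrib, coverageDeriv, mul_sum,
    ← sum_filter_add_sum_filter_not univ (· ∈ S k), filter_mem_eq_inter, univ_inter]
  rw [sum_eq_zero (s := univ.filter (· ∉ S k)), add_zero]
  · refine sum_congr rfl fun e he => ?_
    have hk : k ∈ univ.filter (fun i => e ∈ S i) := mem_filter.2 ⟨mem_univ k, he⟩
    rw [← mul_prod_erase _ _ hk, ← mul_prod_erase _ _ hk, herase, herase]
    simp only [Function.update_self]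
    ring
  · intro e he
    have hk : k ∉ univ.filter (fun i => e ∈ S i) := by simpa using (mem_filter.1 he).2
    rw [← erase_eq_of_notMem hk, herase, herase]
    ring

variable {S A} [DecidableEq ι]

theorem coverageDeriv_anti (hA : ∀ e, 0 ≤ A e) {y z : ι → ℝ} (hzy : z ≤ y) (hy : ∀ j, y j ≤ 1)
    (k : ι) : coverageDeriv S A y k ≤ coverageDeriv S A z k :=
  sum_le_sum fun e _ => mul_le_mul_of_nonneg_left
    (prod_le_prod (fun j _ => sub_nonneg.2 (hy j)) fun j _ => sub_le_sub_left (hzy j) 1) (hA e)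

theorem coverageDeriv_nonneg (hA : ∀ e, 0 ≤ A e) {y : ι → ℝ} (hy : ∀ j, y j ≤ 1) (k : ι) :
    0 ≤ coverageDeriv S A y k :=
  sum_nonneg fun e _ => mul_nonneg (hA e) (prod_nonneg fun j _ => sub_nonneg.2 (hy j))

theorem coverageDeriv_le (hA : ∀ e, 0 ≤ A e) {y : ι → ℝ} (hy : ∀ j, y j ∈ Set.Icc (0 : ℝ) 1)
    (k : ι) : coverageDeriv S A y k ≤ ∑ e ∈ S k, A e := by
  simpa [coverageDeriv] using coverageDeriv_anti hA (fun j => (hy j).1) (fun j => (hy j).2) k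

end Coverage

section Hybrid

variable {m : ℕ}

def hybrid (x : Fin m → ℝ) (ω : Fin m → Bool) (k : ℕ) (j : Fin m) : ℝ :=
  if (j : ℕ) < k then (ω j).toNat else x j

theorem hybrid_zero (x : Fin m → ℝ) (ω : Fin m → Bool) : hybrid x ω 0 = x := by
  funext j; simp [hybrid]

theorem hybrid_length (x : Fin m → ℝ) (ω : Fin m → Bool) :
    hybrid x ω m = fun j => ((ω j).toNat : ℝ) := by
  funext j; simp [hybrid]

theorem hybrid_self (x : Fin m → ℝ) (ω : Fin m → Bool) (k : Fin m) : hybrid x ω k k = x k := by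
  simp [hybrid]

theorem hybrid_succ (x : Fin m → ℝ) (ω : Fin m → Bool) (k : Fin m) :
    hybrid x ω (k + 1) = Function.update (hybrid x ω k) k (ω k).toNat := by
  funext j
  rcases eq_or_ne j k with rfl | hjk
  · simp [hybrid]
  · have : (j : ℕ) ≠ k := Fin.val_ne_of_ne hjk
    simp only [hybrid, Function.update_of_ne hjk]
    congr 1
    exact propext (by omega)

theorem hybrid_update_of_le (x : Fin m → ℝ) (ω : Fin m → Bool) {k j : Fin m} (hkj : k ≤ j)
    (v : Bool) : hybrid x (Function.update ω j v) k = hybrid x ω k := by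
  funext i
  simp only [hybrid]
  split_ifs with hik
  · rw [Function.update_of_ne (Fin.ne_of_lt (lt_of_lt_of_le hik hkj))]
  · rfl

theorem hybrid_mem_Icc {x : Fin m → ℝ} (hx : ∀ i, x i ∈ Set.Icc (0 : ℝ) 1) (ω : Fin m → Bool)
    (k : ℕ) (j : Fin m) : hybrid x ω k j ∈ Set.Icc (0 : ℝ) 1 := by
  unfold hybrid
  split_ifs
  · cases ω j <;> simp
  · exact hx j

theorem hybrid_false_le (x : Fin m → ℝ) (ω : Fin m → Bool) (k : ℕ) :
    hybrid x (fun _ => false) k ≤ hybrid x ω k := fun j => by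
  unfold hybrid
  split_ifs <;> simp

variable {α : Type*} [Fintype α] [DecidableEq α] {S : Fin m → Finset α} {A : α → ℝ}

theorem coverageExt_indicator_sub_eq_sum (x : Fin m → ℝ) (ω : Fin m → Bool) :
    coverageExt S A (fun i => (ω i).toNat) - coverageExt S A x
      = ∑ k, ((ω k).toNat - x k) * coverageDeriv S A (hybrid x ω k) k := by
  calc _ = coverageExt S A (hybrid x ω m) - coverageExt S A (hybrid x ω 0) := by
        rw [hybrid_length, hybrid_zero]
    _ = ∑ k : Fin m, (coverageExt S A (hybrid x ω (k + 1)) - coverageExt S A (hybrid x ω k)) := by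
        rw [Fin.sum_univ_eq_sum_range (fun k => coverageExt S A (hybrid x ω (k + 1))
          - coverageExt S A (hybrid x ω k))]
        exact (sum_range_sub (fun k => coverageExt S A (hybrid x ω k)) m).symm
    _ = _ := sum_congr rfl fun k _ => by
        conv_lhs => rw [hybrid_succ, ← Function.update_eq_self (k : Fin m) (hybrid x ω k),
          hybrid_self, Function.update_idem]
        exact coverageExt_update_sub S A _ _ _ _

/-- The slopes can only grow when the rounded coordinates are replaced by `0` (submodularity),
and for `ω = false` the telescoping identity reads `G(x) = ∑ₖ xₖ cₖ`. -/
theorem sum_mul_coverageDeriv_hybrid_le (hA : ∀ e, 0 ≤ A e) {x : Fin m → ℝ}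
    (hx : ∀ i, x i ∈ Set.Icc (0 : ℝ) 1) (ω : Fin m → Bool) :
    ∑ k, x k * coverageDeriv S A (hybrid x ω k) k ≤ coverageExt S A x := by
  have hfalse := coverageExt_indicator_sub_eq_sum (S := S) (A := A) x (fun _ => false)
  simp only [Bool.toNat_false, Nat.cast_zero, zero_sub, neg_mul, sum_neg_distrib] at hfalse
  rw [show (fun _ : Fin m => (0 : ℝ)) = 0 from rfl, coverageExt_zero] at hfalse
  calc ∑ k, x k * coverageDeriv S A (hybrid x ω k) k
      ≤ ∑ k, x k * coverageDeriv S A (hybrid x (fun _ => false) k) k :=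
        sum_le_sum fun k _ => mul_le_mul_of_nonneg_left (coverageDeriv_anti hA
          (hybrid_false_le x ω k) (fun j => (hybrid_mem_Icc hx ω k j).2) k) (hx k).1
    _ = coverageExt S A x := by linarith

theorem sum_indicator_coverageExt_sub_le (hA : ∀ e, 0 ≤ A e) {b : ℝ} (hb : 0 < b)
    (hLip : ∀ i, ∑ e ∈ S i, A e ≤ b) {x : Fin m → ℝ} (hx : ∀ i, x i ∈ Set.Icc (0 : ℝ) 1)
    (hG : 0 < coverageExt S A x) {s : ℝ} (hs : 0 ≤ s) :
    ∑ ω, {ω | coverageExt S A (fun i => (ω i).toNat) - coverageExt S A x ≤ -s}.indicator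
        (bernoulliWeight x) ω
      ≤ exp (-(s ^ 2 / (2 * b * coverageExt S A x))) := by
  simp_rw [coverageExt_indicator_sub_eq_sum]
  exact sum_indicator_bernoulliWeight_le hx hb
    (fun k ω => coverageDeriv_nonneg hA (fun j => (hybrid_mem_Icc hx ω k j).2) k)
    (fun k ω => (coverageDeriv_le hA (hybrid_mem_Icc hx ω k) k).trans (hLip k))
    (fun k j ω v hkj => by rw [hybrid_update_of_le x ω hkj]) hG
    (sum_mul_coverageDeriv_hybrid_le hA hx) hs

end Hybrid

/-- Concentration for randomized rounding of a weighted coverage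
function: if `g({i}) ≤ b` for all `i` and the multilinear extension value is at least
`2b`, then independent rounding `R` of `x` satisfies `g(R) ≥ b` except with
probability at most `e^{-1/4}`. -/
theorem coverage_rounding_concentration
    {α : Type*} [Fintype α] [DecidableEq α] {m : ℕ}
    (S : Fin m → Finset α) (A : α → ℝ) (hA : ∀ e, 0 ≤ A e)
    (b : ℝ) (hb : 0 < b)
    (hLip : ∀ i : Fin m, ∑ e ∈ S i, A e ≤ b)
    (x : Fin m → ℝ) (hx : ∀ i, x i ∈ Set.Icc (0:ℝ) 1)
    (hG : 2 * b ≤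
      ∑ e, A e * (1 - ∏ i ∈ Finset.univ.filter (fun i => e ∈ S i), (1 - x i))) :
    (Measure.pi (fun i : Fin m =>
        (PMF.bernoulli (Real.toNNReal (x i))
          (by simpa using Real.toNNReal_le_one.mpr (hx i).2)).toMeasure))
      {ω : Fin m → Bool |
        (∑ e ∈ (Finset.univ.filter (fun i => ω i = true)).biUnion S, A e) < b} ≤
      ENNReal.ofReal (Real.exp (-(1 / 4))) := by
  set G := coverageExt S A x
  change 2 * b ≤ G at hG
  have hevent : {ω : Fin m → Bool | ∑ e ∈ (univ.filter (fun i => ω i = true)).biUnion S, A e < b}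
      ⊆ {ω | coverageExt S A (fun i => (ω i).toNat) - G ≤ -(G / 2)} := fun ω hω => by
    rw [Set.mem_ofPred_eq, coverageExt_indicator]
    rw [Set.mem_ofPred_eq] at hω
    linarith
  rw [pi_bernoulli_apply hx]
  refine ENNReal.ofReal_le_ofReal ?_
  calc _ ≤ ∑ ω, {ω | coverageExt S A (fun i => (ω i).toNat) - G ≤ -(G / 2)}.indicator
          (bernoulliWeight x) ω :=
        sum_le_sum fun ω _ => Set.indicator_le_indicator_of_subset hevent
          (bernoulliWeight_nonneg hx) ω
    _ ≤ exp (-((G / 2) ^ 2 / (2 * b * G))) :=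
        sum_indicator_coverageExt_sub_le hA hb hLip hx (by linarith) (by linarith)
    _ ≤ exp (-(1 / 4)) := by
        refine exp_le_exp.2 (neg_le_neg ?_)
        rw [le_div_iff₀ (by nlinarith)]
        nlinarith
end
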